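/- arXiv:1207.2846 — 9 statements merged into one kernel-verified Lean document; each statement's English description precedes it below -/
import Mathlib

section
/- The constant sequence Y_n = f · 2^{-(β/3)(n+1)}, for n ≥ 0, satisfies the stationary equations of the inviscid forced classic dyadic model: for all n ≥ 0, 2^{βn} Y_{n-1}² - 2^{β(n+1)} Y_n Y_{n+1} = 0 with the convention Y_{-1} = f; moreover, if β > 0 this sequence is square-summable. -/
/-!
With `q = 2^(-β/3)` the sequence is `Y n = f q^(n+1)`, so both terms of the `n`-th stationary
equation equal `f² 2^(βn/3)`: the equation reduces to an identity between exponents. For `β > 0`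
we have `q² < 1`, and `Y n ^ 2 = (f q)² (q²)ⁿ` is a convergent geometric series.
-/

open Real

theorem rpow_mul_mul_sq_eq_of_add_eq {b a c a' d e : ℝ} (f : ℝ) (hb : 0 < b)
    (h : a + 2 * c = a' + d + e) :
    b ^ a * (f * b ^ c) ^ 2 = b ^ a' * (f * b ^ d) * (f * b ^ e) := by
  have hpow : b ^ a * b ^ c * b ^ c = b ^ a' * b ^ d * b ^ e := by
    rw [← rpow_add hb, ← rpow_add hb, ← rpow_add hb, ← rpow_add hb]
    congr 1
    linarith
  linear_combination f ^ 2 * hpow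

theorem summable_sq_mul_rpow_neg_mul_succ {b s : ℝ} (f : ℝ) (hb : 1 < b) (hs : 0 < s) :
    Summable fun n : ℕ => (f * b ^ (-s * ((n : ℝ) + 1))) ^ 2 := by
  have hq0 : 0 ≤ b ^ (-s) := (rpow_pos_of_pos (by linarith) _).le
  have hq1 : b ^ (-s) < 1 := rpow_lt_one_of_one_lt_of_neg hb (by linarith)
  have hterm (n : ℕ) :
      (f * b ^ (-s * ((n : ℝ) + 1))) ^ 2 = (f * b ^ (-s)) ^ 2 * ((b ^ (-s)) ^ 2) ^ n := by
    rw [rpow_mul (by linarith), ← Nat.cast_add_one, rpow_natCast]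
    ring
  simp only [hterm]
  exact (summable_geometric_of_lt_one (by positivity) (by nlinarith)).mul_left _

theorem classic_dyadic_inviscid_stationary_general (β f : ℝ) (hβ : 0 < β)
    (Y : ℕ → ℝ) (hY : ∀ n : ℕ, Y n = f * (2:ℝ) ^ (-(β / 3) * ((n : ℝ) + 1))) :
    (∀ n : ℕ,
      (2:ℝ) ^ (β * (n : ℝ)) * (if n = 0 then f else Y (n - 1)) ^ 2
        - (2:ℝ) ^ (β * ((n : ℝ) + 1)) * Y n * Y (n + 1) = 0)
    ∧ Summable (fun n : ℕ => (Y n) ^ 2) := by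
  refine ⟨fun n => ?_, ?_⟩
  · have hprev : (if n = 0 then f else Y (n - 1)) = f * (2:ℝ) ^ (-(β / 3) * (n : ℝ)) := by
      rcases n with _ | m
      · simp
      · simp [hY]
    rw [hprev, hY, hY, sub_eq_zero]
    exact rpow_mul_mul_sq_eq_of_add_eq f two_pos (by push_cast; ring)
  · simp only [hY]
    exact summable_sq_mul_rpow_neg_mul_succ f one_lt_two (by positivity)

theorem classic_dyadic_inviscid_stationary (β f : ℝ) (hβ : 0 < β) (hf : 0 ≤ f)
    (Y : ℕ → ℝ) (hY : ∀ n : ℕ, Y n = f * (2:ℝ) ^ (-(β / 3) * ((n : ℝ) + 1))) :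
    (∀ n : ℕ,
      (2:ℝ) ^ (β * (n : ℝ)) * (if n = 0 then f else Y (n - 1)) ^ 2
        - (2:ℝ) ^ (β * ((n : ℝ) + 1)) * Y n * Y (n + 1) = 0)
    ∧ Summable (fun n : ℕ => (Y n) ^ 2) :=
  classic_dyadic_inviscid_stationary_general β f hβ Y hY
end

section
/- Let J be a rooted tree in which every node has exactly N* = 2^{2α̃} children, and consider the family X_j := f · 2^{-((|j|+1)/3)(2α̃+α)} for j ∈ J (with |j| the generation of j). Then X satisfies the stationary equations of the inviscid forced tree dyadic model: for all j, 2^{α|j|} X_{j̄}² = Σ_{k child of j} 2^{α|k|} X_j X_k, with X at the parent of the root set to f. Moreover, Σ_{j∈J} X_j² < ∞ if and only if α > α̃. -/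
/-!
Everything depends on a node only through its generation: `X j = x (gen j)` with
`x t = f * 2 ^ (-((t + 1) / 3) * (2 * αt + α))`. A node of generation `n` has `N = 2 ^ (2 * αt)`
children, all of generation `n + 1`, so the stationary equation at `j` is the exponent identity
`2 ^ (α n) x(n-1)² = 2 ^ (2 αt) 2 ^ (α (n+1)) x(n) x(n+1)`, where `x (-1) = f` stands for the
parent of the root. Generation `n` has `N ^ n` nodes, so `∑ X j ^ 2 = ∑ₙ N ^ n x(n)²` is a
geometric series `c ∑ₙ ρ ^ n` with ratio `ρ = 2 ^ (2 (αt - α) / 3)`, which converges iff `αt < α`.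
-/

open Set

theorem summable_comp_iff_summable_ncard_mul {ι β : Type*} (p : ι → β) {a : β → ℝ}
    (ha : ∀ b, 0 ≤ a b) (hfin : ∀ b, {i | p i = b}.Finite) :
    Summable (fun i => a (p i)) ↔ Summable fun b => ({i | p i = b}.ncard : ℝ) * a b := by
  have hfiber (b : β) : ∑' i : {i | p i = b}, a (p i) = ({i | p i = b}.ncard : ℝ) * a b := by
    have := (hfin b).fintype
    rw [tsum_fintype, Finset.sum_congr rfl fun i _ => congrArg a i.2, Finset.sum_const,
      Finset.card_univ, nsmul_eq_mul, ← Nat.card_eq_fintype_card, Nat.card_coe_set_eq]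
  rw [summable_partition (s := fun b => {i | p i = b}) (fun _ => ha _)
    fun i => ⟨p i, rfl, fun _ hb => hb.symm⟩]
  simp only [hfiber]
  exact and_iff_right fun b => have := (hfin b).to_subtype; .of_finite

abbrev children {J : Type*} (root : J) (parent : J → J) (j : J) : Set J :=
  {k | parent k = j ∧ k ≠ root}

section RootedTree

variable {J : Type*} {root : J} {parent : J → J} {gen : J → ℕ}

lemma eq_root_of_gen_eq_zero (hgen : ∀ j, j ≠ root → gen j = gen (parent j) + 1) {j : J}
    (hj : gen j = 0) : j = root := by
  by_contra hne
  simp [hgen j hne] at hj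

lemma gen_of_mem_children (hgen : ∀ j, j ≠ root → gen j = gen (parent j) + 1) {j k : J}
    (hk : k ∈ children root parent j) : gen k = gen j + 1 :=
  hk.1 ▸ hgen k hk.2

lemma setOf_gen_succ_eq_biUnion_children (hgen_root : gen root = 0)
    (hgen : ∀ j, j ≠ root → gen j = gen (parent j) + 1) (g : ℕ) :
    {k | gen k = g + 1} = ⋃ j ∈ {j | gen j = g}, children root parent j := by
  ext k
  simp only [mem_ofPred_eq, mem_iUnion, exists_prop]
  constructor
  · intro hk
    have hk_root : k ≠ root := by rintro rfl; simp [hgen_root] at hk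
    exact ⟨parent k, by have := hgen k hk_root; omega, rfl, hk_root⟩
  · rintro ⟨j, rfl, hk⟩
    exact gen_of_mem_children hgen hk

lemma pairwiseDisjoint_children (s : Set J) : s.PairwiseDisjoint (children root parent) :=
  fun _ _ _ _ hij => disjoint_left.2 fun _ hki hkj => hij (hki.1.symm.trans hkj.1)

theorem ncard_setOf_gen_eq (hgen_root : gen root = 0)
    (hgen : ∀ j, j ≠ root → gen j = gen (parent j) + 1) {N : ℕ} (hN : 0 < N)
    (hcard : ∀ j, (children root parent j).ncard = N) (g : ℕ) :
    {j | gen j = g}.Finite ∧ {j | gen j = g}.ncard = N ^ g := by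
  induction g with
  | zero =>
    have hroot : {j | gen j = 0} = {root} :=
      ext fun j => ⟨eq_root_of_gen_eq_zero hgen, fun hj => hj ▸ hgen_root⟩
    simp [hroot]
  | succ g ih =>
    have hfin (j : J) : (children root parent j).Finite := finite_of_ncard_pos (hcard j ▸ hN)
    rw [setOf_gen_succ_eq_biUnion_children hgen_root hgen]
    refine ⟨ih.1.biUnion fun j _ => hfin j, ?_⟩
    rw [ih.1.ncard_biUnion (fun j _ => hfin j) (pairwiseDisjoint_children _),
      finsum_mem_congr rfl fun j _ => hcard j, finsum_mem_eq_finite_toFinset_sum _ ih.1,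
      Finset.sum_const, ← ncard_eq_toFinset_card _ ih.1, ih.2, smul_eq_mul, pow_succ]

lemma tsum_children_comp_gen (hgen : ∀ j, j ≠ root → gen j = gen (parent j) + 1) {N : ℕ}
    (hN : 0 < N) (hcard : ∀ j, (children root parent j).ncard = N) (j : J) (F : ℕ → ℝ) :
    ∑' k : children root parent j, F (gen k) = N * F (gen j + 1) := by
  have := (finite_of_ncard_pos (hcard j ▸ hN)).fintype
  rw [tsum_fintype, Finset.sum_congr rfl fun k _ => congrArg F (gen_of_mem_children hgen k.2),
    Finset.sum_const, Finset.card_univ, ← Nat.card_eq_fintype_card, Nat.card_coe_set_eq, hcard,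
    nsmul_eq_mul]

theorem summable_comp_gen_iff (hgen_root : gen root = 0)
    (hgen : ∀ j, j ≠ root → gen j = gen (parent j) + 1) {N : ℕ} (hN : 0 < N)
    (hcard : ∀ j, (children root parent j).ncard = N) {a : ℕ → ℝ} (ha : ∀ g, 0 ≤ a g) :
    Summable (fun j => a (gen j)) ↔ Summable fun g => (N : ℝ) ^ g * a g := by
  rw [summable_comp_iff_summable_ncard_mul gen ha
    fun g => (ncard_setOf_gen_eq hgen_root hgen hN hcard g).1]
  simp only [(ncard_setOf_gen_eq hgen_root hgen hN hcard _).2, Nat.cast_pow]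

end RootedTree

section StationaryProfile

variable (α αt f : ℝ)

noncomputable def stationaryProfile (t : ℝ) : ℝ := f * (2 : ℝ) ^ (-((t + 1) / 3) * (2 * αt + α))

lemma stationaryProfile_neg_one : stationaryProfile α αt f (-1) = f := by
  simp [stationaryProfile]

lemma stationaryProfile_balance (t : ℝ) :
    (2 : ℝ) ^ (α * t) * stationaryProfile α αt f (t - 1) ^ 2
      = (2 : ℝ) ^ (2 * αt) * ((2 : ℝ) ^ (α * (t + 1)) * stationaryProfile α αt f t
          * stationaryProfile α αt f (t + 1)) := by
  have h2 : (0 : ℝ) < 2 := two_pos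
  simp only [stationaryProfile]
  calc _ = f ^ 2 * ((2 : ℝ) ^ (α * t) * (2 : ℝ) ^ (-((t - 1 + 1) / 3) * (2 * αt + α))
          * (2 : ℝ) ^ (-((t - 1 + 1) / 3) * (2 * αt + α))) := by ring
    _ = f ^ 2 * ((2 : ℝ) ^ (2 * αt) * (2 : ℝ) ^ (α * (t + 1))
          * (2 : ℝ) ^ (-((t + 1) / 3) * (2 * αt + α))
          * (2 : ℝ) ^ (-((t + 1 + 1) / 3) * (2 * αt + α))) := by
      simp only [← Real.rpow_add h2]
      ring_nf
    _ = _ := by ring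

lemma two_rpow_pow_mul_stationaryProfile_sq (g : ℕ) :
    ((2 : ℝ) ^ (2 * αt)) ^ g * stationaryProfile α αt f g ^ 2
      = f ^ 2 * (2 : ℝ) ^ (-(2 * (2 * αt + α) / 3)) * ((2 : ℝ) ^ (2 * (αt - α) / 3)) ^ g := by
  have h2 : (0 : ℝ) < 2 := two_pos
  simp only [stationaryProfile, mul_pow, ← Real.rpow_mul_natCast h2.le]
  calc _ = f ^ 2 * ((2 : ℝ) ^ (2 * αt * g) * (2 : ℝ) ^ (-((g + 1) / 3) * (2 * αt + α) * 2)) := by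
        push_cast; ring
    _ = _ := by
      rw [← Real.rpow_add h2, mul_assoc (f ^ 2), ← Real.rpow_add h2]
      ring_nf

lemma summable_stationaryProfile_sq_iff (hf : f ≠ 0) :
    Summable (fun g : ℕ => ((2 : ℝ) ^ (2 * αt)) ^ g * stationaryProfile α αt f g ^ 2)
      ↔ αt < α := by
  have hρ : 0 < (2 : ℝ) ^ (2 * (αt - α) / 3) := by positivity
  simp only [two_rpow_pow_mul_stationaryProfile_sq]
  rw [summable_mul_left_iff (by positivity), summable_geometric_iff_norm_lt_one,
    Real.norm_of_nonneg hρ.le, Real.rpow_lt_one_iff_of_pos two_pos]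
  norm_num
  constructor <;> intro h <;> linarith

end StationaryProfile

theorem tree_dyadic_inviscid_stationary_general
    (J : Type) [DecidableEq J] (root : J) (parent : J → J) (gen : J → ℕ)
    (hgen_root : gen root = 0)
    (hgen : ∀ j : J, j ≠ root → gen j = gen (parent j) + 1)
    (α αt f : ℝ) (hf : 0 < f)
    (N : ℕ) (hN : (N : ℝ) = (2:ℝ) ^ (2 * αt))
    (hcard : ∀ j : J, {k : J | parent k = j ∧ k ≠ root}.ncard = N)
    (X : J → ℝ)
    (hX : ∀ j : J, X j = f * (2:ℝ) ^ (-(((gen j : ℝ) + 1) / 3) * (2 * αt + α))) :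
    (∀ j : J,
      (2:ℝ) ^ (α * (gen j : ℝ)) * (if j = root then f else X (parent j)) ^ 2
        = ∑' k : {k : J | parent k = j ∧ k ≠ root},
            (2:ℝ) ^ (α * (gen (k : J) : ℝ)) * X j * X (k : J))
    ∧ (Summable (fun j : J => (X j) ^ 2) ↔ αt < α) := by
  have hN_pos : 0 < N := by exact_mod_cast hN ▸ Real.rpow_pos_of_pos two_pos (2 * αt)
  have hX' (j : J) : X j = stationaryProfile α αt f (gen j) := hX j
  refine ⟨fun j => ?_, ?_⟩
  · have hparent : (if j = root then f else X (parent j))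
        = stationaryProfile α αt f (gen j - 1) := by
      by_cases hj : j = root
      · simp [hj, hgen_root, stationaryProfile_neg_one]
      · rw [if_neg hj, hX', hgen j hj]
        push_cast
        ring_nf
    rw [hparent]
    simp only [hX']
    rw [tsum_children_comp_gen hgen hN_pos hcard j
      fun n => (2 : ℝ) ^ (α * n) * stationaryProfile α αt f (gen j) * stationaryProfile α αt f n,
      hN, stationaryProfile_balance]
    push_cast
    ring_nf
  · simp only [hX']
    rw [summable_comp_gen_iff hgen_root hgen hN_pos hcard
      (a := fun g => stationaryProfile α αt f g ^ 2) fun g => sq_nonneg _, hN]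
    exact summable_stationaryProfile_sq_iff α αt f hf.ne'

theorem tree_dyadic_inviscid_stationary
    (J : Type) [DecidableEq J] (root : J) (parent : J → J) (gen : J → ℕ)
    (hgen_root : gen root = 0)
    (hparent_root : parent root = root)
    (hgen : ∀ j : J, j ≠ root → gen j = gen (parent j) + 1)
    (hfin : ∀ j : J, {k : J | parent k = j ∧ k ≠ root}.Finite)
    (α αt f : ℝ) (hα : 0 < α) (hf : 0 < f)
    (N : ℕ) (hN : (N : ℝ) = (2:ℝ) ^ (2 * αt))
    (hcard : ∀ j : J, {k : J | parent k = j ∧ k ≠ root}.ncard = N)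
    (X : J → ℝ)
    (hX : ∀ j : J, X j = f * (2:ℝ) ^ (-(((gen j : ℝ) + 1) / 3) * (2 * αt + α))) :
    (∀ j : J,
      (2:ℝ) ^ (α * (gen j : ℝ)) * (if j = root then f else X (parent j)) ^ 2
        = ∑' k : {k : J | parent k = j ∧ k ≠ root},
            (2:ℝ) ^ (α * (gen (k : J) : ℝ)) * X j * X (k : J))
    ∧ (Summable (fun j : J => (X j) ^ 2) ↔ αt < α) :=
  tree_dyadic_inviscid_stationary_general J root parent gen hgen_root hgen α αt f hf N hN hcard X hX
end

section
/- Any positive l² solution of the unforced inviscid tree dyadic model has non-increasing energy: for 0 ≤ s < t, Σ_j X_j(t)² ≤ Σ_j X_j(s)². -/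
/-!
Truncate the energy to the finitely many nodes of generation at most `N`. Since such a set
contains the parent of each of its non-root nodes, every inflow term `c_k X_{k̄}² X_k` entering a
node `k` of the set is matched by the same outflow term leaving its parent, and the outflow through
the boundary of the set is nonnegative. So each truncated energy is nonincreasing, and the full
energy, their supremum, is too.
-/

open Set

theorem Finset.sum_filter_ne_root_le_sum_sum_children {J M : Type*} [DecidableEq J]
    [AddCommMonoid M] [PartialOrder M] [IsOrderedAddMonoid M]
    {root : J} {parent : J → J} {C : J → Finset J}
    (hC : ∀ j k, k ∈ C j ↔ parent k = j ∧ k ≠ root)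
    {F : Finset J} (hF : ∀ k ∈ F, k ≠ root → parent k ∈ F) {w : J → M} (hw : ∀ k, 0 ≤ w k) :
    ∑ k ∈ F with k ≠ root, w k ≤ ∑ j ∈ F, ∑ k ∈ C j, w k := by
  have hdisj : (F : Set J).PairwiseDisjoint C := by
    intro a _ b _ hab
    refine Finset.disjoint_left.2 fun k hka hkb => hab ?_
    rw [← ((hC a k).1 hka).1, ← ((hC b k).1 hkb).1]
  rw [← Finset.sum_biUnion hdisj]
  refine Finset.sum_le_sum_of_subset_of_nonneg (fun k hk => ?_) fun k _ _ => hw k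
  obtain ⟨hkF, hkr⟩ := Finset.mem_filter.1 hk
  exact Finset.mem_biUnion.2 ⟨parent k, hF k hkF hkr, (hC _ k).2 ⟨rfl, hkr⟩⟩

theorem sum_mul_dyadic_rhs_nonpos {J : Type*} [DecidableEq J]
    {root : J} {parent : J → J} {C : J → Finset J}
    (hC : ∀ j k, k ∈ C j ↔ parent k = j ∧ k ≠ root)
    {F : Finset J} (hF : ∀ k ∈ F, k ≠ root → parent k ∈ F)
    {c x : J → ℝ} (hc : ∀ j, 0 ≤ c j) (hx : ∀ j, 0 ≤ x j) :
    ∑ j ∈ F, x j * (c j * (if j = root then 0 else x (parent j)) ^ 2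
      - ∑ k ∈ C j, c k * x j * x k) ≤ 0 := by
  set w : J → ℝ := fun k => c k * x (parent k) ^ 2 * x k
  have hinflow : ∑ j ∈ F, x j * (c j * (if j = root then 0 else x (parent j)) ^ 2)
      = ∑ k ∈ F with k ≠ root, w k := by
    rw [Finset.sum_filter]
    refine Finset.sum_congr rfl fun j _ => ?_
    by_cases hj : j = root
    · simp [hj]
    · rw [if_neg hj, if_pos hj]; ring
  have houtflow : ∑ j ∈ F, x j * ∑ k ∈ C j, c k * x j * x k = ∑ j ∈ F, ∑ k ∈ C j, w k := by
    refine Finset.sum_congr rfl fun j _ => ?_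
    rw [Finset.mul_sum]
    refine Finset.sum_congr rfl fun k hk => ?_
    simp only [w, ((hC j k).1 hk).1]
    ring
  simp only [mul_sub, Finset.sum_sub_distrib, hinflow, houtflow, sub_nonpos]
  exact Finset.sum_filter_ne_root_le_sum_sum_children hC hF fun k => by
    have := hc k; have := hx k; have := hx (parent k); positivity

theorem antitoneOn_sum_sq_of_hasDerivAt {ι : Type*} (F : Finset ι) {X D : ι → ℝ → ℝ}
    {s : Set ℝ} (hs : Convex ℝ s) (hX : ∀ j ∈ F, ∀ u ∈ s, HasDerivAt (X j) (D j u) u)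
    (hD : ∀ u ∈ s, ∑ j ∈ F, X j u * D j u ≤ 0) :
    AntitoneOn (fun u => ∑ j ∈ F, X j u ^ 2) s := by
  have hderiv : ∀ u ∈ s, HasDerivAt (fun u => ∑ j ∈ F, X j u ^ 2)
      (∑ j ∈ F, 2 * X j u * D j u) u := fun u hu =>
    HasDerivAt.fun_sum fun j hj => by simpa using (hX j hj u hu).fun_pow 2
  refine antitoneOn_of_hasDerivWithinAt_nonpos hs
    (fun u hu => (hderiv u hu).continuousAt.continuousWithinAt)
    (fun u hu => (hderiv u (interior_subset hu)).hasDerivWithinAt) fun u hu => ?_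
  simpa only [mul_assoc, ← Finset.mul_sum] using
    mul_nonpos_of_nonneg_of_nonpos zero_le_two (hD u (interior_subset hu))

theorem tsum_le_tsum_of_sum_le_of_exhaustion {ι κ : Type*} {f g : ι → ℝ}
    (F : κ → Finset ι) (hF : ∀ G : Finset ι, ∃ N, G ⊆ F N)
    (hf : 0 ≤ f) (hg : 0 ≤ g) (hgs : Summable g)
    (h : ∀ N, ∑ i ∈ F N, f i ≤ ∑ i ∈ F N, g i) : ∑' i, f i ≤ ∑' i, g i := by
  refine Real.tsum_le_of_sum_le hf fun G => ?_
  obtain ⟨N, hGN⟩ := hF G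
  calc ∑ i ∈ G, f i ≤ ∑ i ∈ F N, f i :=
        Finset.sum_le_sum_of_subset_of_nonneg hGN fun i _ _ => hf i
    _ ≤ ∑ i ∈ F N, g i := h N
    _ ≤ ∑' i, g i := hgs.sum_le_tsum _ fun i _ => hg i

section RootedTree

variable {J : Type*} {root : J} {parent : J → J} {gen : J → ℕ}

theorem setOf_gen_le_succ_subset (hgen : ∀ j, j ≠ root → gen j = gen (parent j) + 1) (N : ℕ) :
    {j | gen j ≤ N + 1} ⊆
      insert root (⋃ i ∈ {i | gen i ≤ N}, {k | parent k = i ∧ k ≠ root}) := by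
  intro j hj
  by_cases hjr : j = root
  · exact hjr ▸ Set.mem_insert _ _
  · have hj : gen j ≤ N + 1 := hj
    have hparent : gen (parent j) ≤ N := by have := hgen j hjr; omega
    exact Set.mem_insert_of_mem _ (Set.mem_biUnion hparent ⟨rfl, hjr⟩)

theorem finite_setOf_gen_le (hgen : ∀ j, j ≠ root → gen j = gen (parent j) + 1)
    (hfin : ∀ j, {k | parent k = j ∧ k ≠ root}.Finite) (N : ℕ) : {j | gen j ≤ N}.Finite := by
  induction N with
  | zero =>
    refine (Set.finite_singleton root).subset fun j hj => ?_
    by_contra hjr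
    have hj : gen j ≤ 0 := hj
    have := hgen j hjr
    omega
  | succ N ih =>
    exact ((ih.biUnion fun i _ => hfin i).insert root).subset (setOf_gen_le_succ_subset hgen N)

end RootedTree

theorem tree_dyadic_energy_nonincreasing_general
    (J : Type) [DecidableEq J] (root : J) (parent : J → J) (gen : J → ℕ)
    (hgen : ∀ j : J, j ≠ root → gen j = gen (parent j) + 1)
    (hfin : ∀ j : J, {k : J | parent k = j ∧ k ≠ root}.Finite)
    (α : ℝ)
    (X : J → ℝ → ℝ)
    (hsol : ∀ j : J, ∀ t : ℝ, 0 ≤ t →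
      HasDerivAt (X j)
        ((2:ℝ) ^ (α * (gen j : ℝ)) * (if j = root then 0 else X (parent j) t) ^ 2
          - ∑' k : {k : J | parent k = j ∧ k ≠ root},
              (2:ℝ) ^ (α * (gen (k : J) : ℝ)) * X j t * X (k : J) t) t)
    (hpos : ∀ j : J, ∀ t : ℝ, 0 ≤ t → 0 ≤ X j t)
    (hl2 : ∀ t : ℝ, 0 ≤ t → Summable (fun j : J => (X j t) ^ 2)) :
    ∀ s t : ℝ, 0 ≤ s → s < t →
      ∑' j : J, (X j t) ^ 2 ≤ ∑' j : J, (X j s) ^ 2 := by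
  intro s t hs hst
  set c : J → ℝ := fun j => (2:ℝ) ^ (α * (gen j : ℝ))
  set C : J → Finset J := fun j => (hfin j).toFinset
  set F : ℕ → Finset J := fun N => (finite_setOf_gen_le hgen hfin N).toFinset
  have hC : ∀ j k, k ∈ C j ↔ parent k = j ∧ k ≠ root := fun j k => (hfin j).mem_toFinset
  have hderiv : ∀ j, ∀ u ∈ Ici (0 : ℝ), HasDerivAt (X j)
      (c j * (if j = root then 0 else X (parent j) u) ^ 2 - ∑ k ∈ C j, c k * X j u * X k u) u := by
    intro j u hu
    convert hsol j u hu using 2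
    rw [← Finset.tsum_subtype', Set.Finite.coe_toFinset]
  have hF : ∀ N, ∀ k ∈ F N, k ≠ root → parent k ∈ F N := by
    intro N k hk hkr
    simp only [F, Set.Finite.mem_toFinset, Set.mem_ofPred_eq] at hk ⊢
    have := hgen k hkr
    omega
  have hanti (N : ℕ) : AntitoneOn (fun u => ∑ j ∈ F N, X j u ^ 2) (Ici 0) :=
    antitoneOn_sum_sq_of_hasDerivAt (F N) (convex_Ici 0) (fun j _ => hderiv j) fun u hu =>
      sum_mul_dyadic_rhs_nonpos hC (hF N) (fun j => by positivity) fun j => hpos j u hu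
  refine tsum_le_tsum_of_sum_le_of_exhaustion F (fun G => ⟨G.sup gen, fun j hj => ?_⟩)
    (fun j => sq_nonneg _) (fun j => sq_nonneg _) (hl2 s hs)
    fun N => hanti N hs (mem_Ici.2 (hs.trans hst.le)) hst.le
  simpa [F] using Finset.le_sup hj

theorem tree_dyadic_energy_nonincreasing
    (J : Type) [DecidableEq J] (root : J) (parent : J → J) (gen : J → ℕ)
    (hgen_root : gen root = 0)
    (hparent_root : parent root = root)
    (hgen : ∀ j : J, j ≠ root → gen j = gen (parent j) + 1)
    (hfin : ∀ j : J, {k : J | parent k = j ∧ k ≠ root}.Finite)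
    (α : ℝ) (hα : 0 < α)
    (X : J → ℝ → ℝ)
    (hsol : ∀ j : J, ∀ t : ℝ, 0 ≤ t →
      HasDerivAt (X j)
        ((2:ℝ) ^ (α * (gen j : ℝ)) * (if j = root then 0 else X (parent j) t) ^ 2
          - ∑' k : {k : J | parent k = j ∧ k ≠ root},
              (2:ℝ) ^ (α * (gen (k : J) : ℝ)) * X j t * X (k : J) t) t)
    (hpos : ∀ j : J, ∀ t : ℝ, 0 ≤ t → 0 ≤ X j t)
    (hl2 : ∀ t : ℝ, 0 ≤ t → Summable (fun j : J => (X j t) ^ 2)) :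
    ∀ s t : ℝ, 0 ≤ s → s < t →
      ∑' j : J, (X j t) ^ 2 ≤ ∑' j : J, (X j s) ^ 2 :=
  tree_dyadic_energy_nonincreasing_general J root parent gen hgen hfin α X hsol hpos hl2
end

section
/- Let X be a positive l² solution of the forced viscous tree dyadic model with Σ_j X_j(0)² < ∞. Then the total energy satisfies the Gronwall bound Σ_j X_j(t)² ≤ (Σ_j X_j(0)² + 1) e^{2f²t} for all t ≥ 0. -/
open Finset Real

/-!
For a finite set `S` of nodes that contains the root and is closed under `parent`, the energy
`E_S = ∑_{j ∈ S} X_j²` satisfies `E_S' ≤ 2 f² X_root`: damping only dissipates, every transfer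
`c_k X_j² X_k` from a parent `j ∈ S` to a child `k ∈ S` is counted once with each sign, and by
positivity the flux out of `S` is nonnegative. As `2 X_root ≤ X_root² + 1 ≤ E_S + 1`, Grönwall
gives `E_S(t) + 1 ≤ (E_S(0) + 1) e^{f² t}`, and every finite set of nodes lies in such an `S`.
-/

theorem gronwallBound_self (δ K x : ℝ) : gronwallBound δ K K x = (δ + 1) * exp (K * x) - 1 := by
  rcases eq_or_ne K 0 with rfl | hK
  · simp [gronwallBound_K0]
  · rw [gronwallBound_of_K_ne_0 hK, div_self hK]
    ring

theorem add_one_le_mul_exp_of_hasDerivAt {E E' : ℝ → ℝ} {K : ℝ}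
    (hE : ∀ t, 0 ≤ t → HasDerivAt E (E' t) t) (hE' : ∀ t, 0 ≤ t → E' t ≤ K * (E t + 1))
    {t : ℝ} (ht : 0 ≤ t) : E t + 1 ≤ (E 0 + 1) * exp (K * t) := by
  have := le_gronwallBound_of_liminf_deriv_right_le (f' := E') (δ := E 0) (K := K) (ε := K)
    (fun x hx => (hE x hx.1).continuousAt.continuousWithinAt)
    (fun x hx _ hr => (hE x hx.1).hasDerivWithinAt.liminf_right_slope_le hr)
    le_rfl (fun x hx => by linear_combination hE' x hx.1) t ⟨ht, le_rfl⟩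
  rw [sub_zero, gronwallBound_self] at this
  linarith

theorem sum_filter_mem_le_tsum_subtype {J : Type*} {A : Set J} [DecidablePred (· ∈ A)]
    (hA : A.Finite) {g : J → ℝ} (hg : ∀ k ∈ A, 0 ≤ g k) (s : Finset J) :
    ∑ k ∈ s with k ∈ A, g k ≤ ∑' k : A, g k := by
  have : Finite A := hA.to_subtype
  rw [← sum_subtype_eq_sum_filter]
  exact Summable.of_finite.sum_le_tsum _ (fun k _ => hg k k.2)

section Tree

variable {J : Type*} [DecidableEq J] {parent : J → J} {root : J}

def IsRootedSubtree (parent : J → J) (root : J) (S : Finset J) : Prop :=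
  root ∈ S ∧ ∀ j ∈ S, j ≠ root → parent j ∈ S

theorem IsRootedSubtree.union {S T : Finset J} (hS : IsRootedSubtree parent root S)
    (hT : IsRootedSubtree parent root T) : IsRootedSubtree parent root (S ∪ T) := by
  refine ⟨mem_union_left _ hS.1, fun j hj hjr => ?_⟩
  rcases mem_union.1 hj with hj | hj
  · exact mem_union_left _ (hS.2 j hj hjr)
  · exact mem_union_right _ (hT.2 j hj hjr)

theorem exists_isRootedSubtree_superset {gen : J → ℕ}
    (hgen : ∀ j, j ≠ root → gen j = gen (parent j) + 1) (s : Finset J) :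
    ∃ S, s ⊆ S ∧ IsRootedSubtree parent root S := by
  have hsingleton : IsRootedSubtree parent root {root} := ⟨mem_singleton_self _, by simp⟩
  have hnode : ∀ n k, gen k = n → ∃ S, k ∈ S ∧ IsRootedSubtree parent root S := by
    intro n
    induction n with
    | zero =>
      intro k hk
      obtain rfl : k = root := by by_contra h; simp [hgen k h] at hk
      exact ⟨_, mem_singleton_self _, hsingleton⟩
    | succ n ih =>
      intro k hk
      by_cases hkr : k = root
      · exact ⟨_, hkr ▸ mem_singleton_self _, hsingleton⟩
      obtain ⟨S, hpS, hS⟩ := ih (parent k) (by rw [hgen k hkr] at hk; omega)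
      refine ⟨insert k S, mem_insert_self _ _, mem_insert_of_mem hS.1, fun j hj hjr => ?_⟩
      rcases mem_insert.1 hj with rfl | hj
      · exact mem_insert_of_mem hpS
      · exact mem_insert_of_mem (hS.2 j hj hjr)
  induction s using Finset.induction_on with
  | empty => exact ⟨_, empty_subset _, hsingleton⟩
  | insert k s _ ih =>
    obtain ⟨S, hsS, hS⟩ := ih
    obtain ⟨T, hkT, hT⟩ := hnode _ k rfl
    exact ⟨T ∪ S, insert_subset (mem_union_left _ hkT) (hsS.trans subset_union_right), hT.union hS⟩

theorem IsRootedSubtree.sum_transfer_eq {S : Finset J} (hS : IsRootedSubtree parent root S)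
    (c x : J → ℝ) (F : ℝ) :
    ∑ j ∈ S, x j * (c j * (if j = root then F else x (parent j)) ^ 2
      - ∑ k ∈ S with parent k = j ∧ k ≠ root, c k * x j * x k) = c root * F ^ 2 * x root := by
  have hout : ∑ j ∈ S, ∑ k ∈ S with parent k = j ∧ k ≠ root, x j * (c k * x j * x k)
      = ∑ k ∈ S.erase root, x (parent k) * (c k * x (parent k) * x k) := by
    rw [sum_comm' (t' := S.erase root) (s' := fun k => {parent k})]
    · simp only [sum_singleton]
    · intro j k
      simp only [mem_filter, mem_erase, mem_singleton]
      constructor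
      · rintro ⟨-, hk, rfl, hkr⟩
        exact ⟨rfl, hkr, hk⟩
      · rintro ⟨rfl, hkr, hk⟩
        exact ⟨hS.2 k hk hkr, hk, rfl, hkr⟩
  simp only [mul_sub, mul_sum, sum_sub_distrib]
  rw [hout, ← add_sum_erase S _ hS.1, if_pos rfl, add_sub_assoc, ← sum_sub_distrib,
    sum_eq_zero fun k hk => by rw [if_neg (ne_of_mem_erase hk)]; ring]
  ring

-- The paper's `X_{j̄}` is `x (parent j)`, and the forcing `F` plays the root's parent.
noncomputable def treeDyadicField (parent : J → J) (root : J) (c d : J → ℝ) (ν F : ℝ)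
    (x : J → ℝ) (j : J) : ℝ :=
  -ν * d j * x j + c j * (if j = root then F else x (parent j)) ^ 2
    - ∑' k : {k : J | parent k = j ∧ k ≠ root}, c k * x j * x k

variable {c d x : J → ℝ} {ν : ℝ}

theorem mul_treeDyadicField_le (F : ℝ) {j : J} (hνd : 0 ≤ ν * d j) (hc : ∀ k, 0 ≤ c k)
    (hx : ∀ k, 0 ≤ x k) (hfin : {k | parent k = j ∧ k ≠ root}.Finite) (S : Finset J) :
    x j * treeDyadicField parent root c d ν F x j ≤
      x j * (c j * (if j = root then F else x (parent j)) ^ 2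
        - ∑ k ∈ S with parent k = j ∧ k ≠ root, c k * x j * x k) := by
  have hchildren := sum_filter_mem_le_tsum_subtype hfin (g := fun k => c k * x j * x k)
    (fun k _ => mul_nonneg (mul_nonneg (hc k) (hx j)) (hx k)) S
  simp only [Set.mem_ofPred_eq] at hchildren
  have hdamp : 0 ≤ ν * d j * x j ^ 2 := mul_nonneg hνd (sq_nonneg _)
  unfold treeDyadicField
  nlinarith [mul_le_mul_of_nonneg_left hchildren (hx j)]

theorem IsRootedSubtree.sum_mul_treeDyadicField_le {S : Finset J}
    (hS : IsRootedSubtree parent root S) (F : ℝ) (hνd : ∀ j, 0 ≤ ν * d j) (hc : ∀ k, 0 ≤ c k)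
    (hx : ∀ k, 0 ≤ x k) (hfin : ∀ j, {k | parent k = j ∧ k ≠ root}.Finite) :
    ∑ j ∈ S, x j * treeDyadicField parent root c d ν F x j ≤ c root * F ^ 2 * x root :=
  (sum_le_sum fun j _ => mul_treeDyadicField_le F (hνd j) hc hx (hfin j) S).trans_eq
    (hS.sum_transfer_eq c x F)

theorem IsRootedSubtree.energy_add_one_le {S : Finset J} (hS : IsRootedSubtree parent root S)
    {F : ℝ} (hc1 : c root = 1) (hνd : ∀ j, 0 ≤ ν * d j) (hc : ∀ k, 0 ≤ c k)
    (hfin : ∀ j, {k | parent k = j ∧ k ≠ root}.Finite) {X : J → ℝ → ℝ}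
    (hsol : ∀ j t, 0 ≤ t →
      HasDerivAt (X j) (treeDyadicField parent root c d ν F (fun i => X i t) j) t)
    (hpos : ∀ j t, 0 ≤ t → 0 ≤ X j t) {t : ℝ} (ht : 0 ≤ t) :
    ∑ j ∈ S, X j t ^ 2 + 1 ≤ (∑ j ∈ S, X j 0 ^ 2 + 1) * exp (F ^ 2 * t) := by
  refine add_one_le_mul_exp_of_hasDerivAt (E := fun t => ∑ j ∈ S, X j t ^ 2)
    (fun u hu => HasDerivAt.fun_sum fun j _ => (hsol j u hu).pow 2) (fun u hu => ?_) ht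
  have hflow := hS.sum_mul_treeDyadicField_le F hνd hc (hpos · u hu) hfin
  rw [hc1, one_mul] at hflow
  have hroot : X root u ^ 2 ≤ ∑ j ∈ S, X j u ^ 2 :=
    single_le_sum (fun j _ => sq_nonneg (X j u)) hS.1
  calc ∑ j ∈ S, ((2 : ℕ) : ℝ) * X j u ^ (2 - 1)
          * treeDyadicField parent root c d ν F (fun i => X i u) j
        = 2 * ∑ j ∈ S, X j u * treeDyadicField parent root c d ν F (fun i => X i u) j := by
          simp only [mul_sum]; norm_num [mul_assoc]
    _ ≤ 2 * (F ^ 2 * X root u) := by linarith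
    _ ≤ F ^ 2 * (X root u ^ 2 + 1) := by nlinarith [sq_nonneg (X root u - 1), sq_nonneg F]
    _ ≤ F ^ 2 * (∑ j ∈ S, X j u ^ 2 + 1) := by gcongr

end Tree

theorem tree_dyadic_gronwall_energy_bound_general
    (J : Type) [DecidableEq J] (root : J) (parent : J → J) (gen : J → ℕ)
    (hgen_root : gen root = 0)
    (hgen : ∀ j : J, j ≠ root → gen j = gen (parent j) + 1)
    (hfin : ∀ j : J, {k : J | parent k = j ∧ k ≠ root}.Finite)
    (α γ ν f : ℝ) (hν : 0 ≤ ν)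
    (X : J → ℝ → ℝ)
    (hsol : ∀ j : J, ∀ t : ℝ, 0 ≤ t →
      HasDerivAt (X j)
        (-ν * (2:ℝ) ^ (γ * (gen j : ℝ)) * X j t
          + (2:ℝ) ^ (α * (gen j : ℝ)) * (if j = root then f else X (parent j) t) ^ 2
          - ∑' k : {k : J | parent k = j ∧ k ≠ root},
              (2:ℝ) ^ (α * (gen (k : J) : ℝ)) * X j t * X (k : J) t) t)
    (hpos : ∀ j : J, ∀ t : ℝ, 0 ≤ t → 0 ≤ X j t)
    (hinit : Summable (fun j : J => (X j 0) ^ 2)) :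
    ∀ t : ℝ, 0 ≤ t →
      ∑' j : J, (X j t) ^ 2 ≤ ((∑' j : J, (X j 0) ^ 2) + 1) * Real.exp (2 * f ^ 2 * t) := by
  intro t ht
  have hc1 : (2 : ℝ) ^ (α * (gen root : ℝ)) = 1 := by simp [hgen_root]
  refine tsum_le_of_sum_le' (by positivity) fun s => ?_
  obtain ⟨S, hsS, hS⟩ := exists_isRootedSubtree_superset hgen s
  have hS_energy := hS.energy_add_one_le (d := fun j => (2 : ℝ) ^ (γ * (gen j : ℝ))) hc1
    (fun j => by positivity) (fun j => by positivity) hfin hsol hpos ht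
  have hS_init : ∑ j ∈ S, X j 0 ^ 2 ≤ ∑' j, X j 0 ^ 2 :=
    hinit.sum_le_tsum S fun j _ => sq_nonneg _
  have hexp : exp (f ^ 2 * t) ≤ exp (2 * f ^ 2 * t) := exp_le_exp.2 (by nlinarith [sq_nonneg f])
  calc ∑ j ∈ s, X j t ^ 2 ≤ ∑ j ∈ S, X j t ^ 2 :=
        sum_le_sum_of_subset_of_nonneg hsS fun j _ _ => sq_nonneg _
    _ ≤ (∑ j ∈ S, X j 0 ^ 2 + 1) * exp (f ^ 2 * t) := by linarith
    _ ≤ (∑' j, X j 0 ^ 2 + 1) * exp (2 * f ^ 2 * t) := by gcongr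

theorem tree_dyadic_gronwall_energy_bound
    (J : Type) [DecidableEq J] (root : J) (parent : J → J) (gen : J → ℕ)
    (hgen_root : gen root = 0)
    (hparent_root : parent root = root)
    (hgen : ∀ j : J, j ≠ root → gen j = gen (parent j) + 1)
    (hfin : ∀ j : J, {k : J | parent k = j ∧ k ≠ root}.Finite)
    (α γ ν f : ℝ) (hα : 0 < α) (hγ : 0 < γ) (hν : 0 ≤ ν) (hf : 0 ≤ f)
    (X : J → ℝ → ℝ)
    (hsol : ∀ j : J, ∀ t : ℝ, 0 ≤ t →
      HasDerivAt (X j)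
        (-ν * (2:ℝ) ^ (γ * (gen j : ℝ)) * X j t
          + (2:ℝ) ^ (α * (gen j : ℝ)) * (if j = root then f else X (parent j) t) ^ 2
          - ∑' k : {k : J | parent k = j ∧ k ≠ root},
              (2:ℝ) ^ (α * (gen (k : J) : ℝ)) * X j t * X (k : J) t) t)
    (hpos : ∀ j : J, ∀ t : ℝ, 0 ≤ t → 0 ≤ X j t)
    (hl2 : ∀ t : ℝ, 0 ≤ t → Summable (fun j : J => (X j t) ^ 2))
    (hinit : Summable (fun j : J => (X j 0) ^ 2)) :
    ∀ t : ℝ, 0 ≤ t →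
      ∑' j : J, (X j t) ^ 2 ≤ ((∑' j : J, (X j 0) ^ 2) + 1) * Real.exp (2 * f ^ 2 * t) :=
  tree_dyadic_gronwall_energy_bound_general J root parent gen hgen_root hgen hfin α γ ν f hν X hsol
    hpos hinit
end

section
/- For a positive componentwise solution of the tree dyadic model: if X_j(0) > 0 for all nodes j of some generation M, then X_j(t) > 0 for every node j with |j| ≥ M and every t > 0. -/
/-!
At each node the equation is linear in the node's own variable:
`X_j' = -a_j(t) X_j + c_j X_{parent j}²`, where the damping `a_j = ν d_j + Σ_k c_k X_k` is
continuous because a node has finitely many children. With `B_j` a primitive of `a_j`, the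
integrating factor gives `(X_j e^{B_j})' = c_j e^{B_j} X_{parent j}² ≥ 0`. Hence a positive initial
value stays positive, and a nonnegative one becomes positive at once as soon as the parent is
positive for `t > 0`; induction on the generation from `M` downwards finishes the proof.
-/

open Set Real

lemma continuousOn_tsum_of_finite {ι α M : Type*} [Finite ι] [TopologicalSpace α]
    [AddCommMonoid M] [TopologicalSpace M] [ContinuousAdd M] {f : ι → α → M} {S : Set α}
    (hf : ∀ i, ContinuousOn (f i) S) : ContinuousOn (fun t => ∑' i, f i t) S := by
  cases nonempty_fintype ι
  simp only [tsum_fintype]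
  exact continuousOn_finsetSum _ fun i _ => hf i

lemma ContinuousOn.exists_hasDerivAt_Ici {a : ℝ → ℝ} (ha : ContinuousOn a (Ici 0)) :
    ∃ B : ℝ → ℝ, ∀ t, 0 ≤ t → HasDerivAt B (a t) t := by
  have hext : Continuous fun u => a (max u 0) :=
    ha.comp_continuous (continuous_id.max continuous_const) fun u => le_max_right u 0
  refine ⟨fun t => ∫ u in (0 : ℝ)..t, a (max u 0), fun t ht => ?_⟩
  simpa [max_eq_left ht] using (hext.integral_hasStrictDerivAt 0 t).hasDerivAt

section IntegratingFactor

variable {a x s B : ℝ → ℝ}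

lemma hasDerivAt_mul_exp_of_linear {t : ℝ} (hB : HasDerivAt B (a t) t)
    (hx : HasDerivAt x (-a t * x t + s t) t) :
    HasDerivAt (fun u => x u * exp (B u)) (exp (B t) * s t) t := by
  exact (hx.mul hB.exp).congr_deriv (by ring)

variable (hB : ∀ t, 0 ≤ t → HasDerivAt B (a t) t)
  (hx : ∀ t, 0 ≤ t → HasDerivAt x (-a t * x t + s t) t)
include hB hx

lemma continuousOn_mul_exp_of_linear : ContinuousOn (fun u => x u * exp (B u)) (Ici 0) :=
  fun t ht => (hasDerivAt_mul_exp_of_linear (hB t ht) (hx t ht)).continuousAt.continuousWithinAt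

lemma hasDerivWithinAt_mul_exp_of_linear {t : ℝ} (ht : t ∈ interior (Ici (0 : ℝ))) :
    HasDerivWithinAt (fun u => x u * exp (B u)) (exp (B t) * s t) (interior (Ici 0)) t := by
  rw [interior_Ici] at ht
  exact (hasDerivAt_mul_exp_of_linear (hB t ht.le) (hx t ht.le)).hasDerivWithinAt

lemma monotoneOn_mul_exp_of_linear (hs : ∀ t, 0 < t → 0 ≤ s t) :
    MonotoneOn (fun u => x u * exp (B u)) (Ici 0) := by
  refine monotoneOn_of_hasDerivWithinAt_nonneg (convex_Ici 0)
    (continuousOn_mul_exp_of_linear hB hx) (fun t ht => hasDerivWithinAt_mul_exp_of_linear hB hx ht)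
    fun t ht => ?_
  rw [interior_Ici] at ht
  exact mul_nonneg (exp_pos _).le (hs t ht)

lemma strictMonoOn_mul_exp_of_linear (hs : ∀ t, 0 < t → 0 < s t) :
    StrictMonoOn (fun u => x u * exp (B u)) (Ici 0) := by
  refine strictMonoOn_of_hasDerivWithinAt_pos (convex_Ici 0)
    (continuousOn_mul_exp_of_linear hB hx) (fun t ht => hasDerivWithinAt_mul_exp_of_linear hB hx ht)
    fun t ht => ?_
  rw [interior_Ici] at ht
  exact mul_pos (exp_pos _) (hs t ht)

end IntegratingFactor

section LinearPositivity

variable {a x s : ℝ → ℝ} (ha : ContinuousOn a (Ici 0))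
  (hx : ∀ t, 0 ≤ t → HasDerivAt x (-a t * x t + s t) t)
include ha hx

lemma pos_of_hasDerivAt_linear_of_pos_init (hs : ∀ t, 0 < t → 0 ≤ s t) (h0 : 0 < x 0)
    {t : ℝ} (ht : 0 ≤ t) : 0 < x t := by
  obtain ⟨B, hB⟩ := ha.exists_hasDerivAt_Ici
  have hmono : x 0 * exp (B 0) ≤ x t * exp (B t) :=
    monotoneOn_mul_exp_of_linear hB hx hs self_mem_Ici ht ht
  exact (mul_pos_iff_of_pos_right (exp_pos (B t))).mp
    ((mul_pos h0 (exp_pos (B 0))).trans_le hmono)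

lemma pos_of_hasDerivAt_linear_of_pos_source (hs : ∀ t, 0 < t → 0 < s t) (h0 : 0 ≤ x 0)
    {t : ℝ} (ht : 0 < t) : 0 < x t := by
  obtain ⟨B, hB⟩ := ha.exists_hasDerivAt_Ici
  have hmono : x 0 * exp (B 0) < x t * exp (B t) :=
    strictMonoOn_mul_exp_of_linear hB hx hs self_mem_Ici ht.le ht
  exact (mul_pos_iff_of_pos_right (exp_pos (B t))).mp
    ((mul_nonneg h0 (exp_pos (B 0)).le).trans_lt hmono)

end LinearPositivity

theorem tree_dyadic_strict_positivity_propagates_general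
    (J : Type) [DecidableEq J] (root : J) (parent : J → J) (gen : J → ℕ)
    (hgen_root : gen root = 0)
    (hgen : ∀ j : J, j ≠ root → gen j = gen (parent j) + 1)
    (hfin : ∀ j : J, {k : J | parent k = j ∧ k ≠ root}.Finite)
    (c d : J → ℝ) (hc : ∀ j, 0 < c j)
    (ν f : ℝ)
    (X : J → ℝ → ℝ)
    (hsol : ∀ j : J, ∀ t : ℝ, 0 ≤ t →
      HasDerivAt (X j)
        (-ν * d j * X j t
          + c j * (if j = root then f else X (parent j) t) ^ 2
          - ∑' k : {k : J | parent k = j ∧ k ≠ root},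
              c (k : J) * X j t * X (k : J) t) t)
    (hpos : ∀ j : J, ∀ t : ℝ, 0 ≤ t → 0 ≤ X j t)
    (M : ℕ)
    (hinit : ∀ j : J, gen j = M → 0 < X j 0) :
    ∀ j : J, M ≤ gen j → ∀ t : ℝ, 0 < t → 0 < X j t := by
  let damping (j : J) (t : ℝ) : ℝ :=
    ν * d j + ∑' k : {k : J | parent k = j ∧ k ≠ root}, c k * X k t
  have hlin : ∀ j t, 0 ≤ t → HasDerivAt (X j)
      (-damping j t * X j t + c j * (if j = root then f else X (parent j) t) ^ 2) t := by
    intro j t ht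
    convert hsol j t ht using 1
    simp only [damping, mul_comm (c _) (X j t), mul_assoc, tsum_mul_left]
    ring
  have hdamping : ∀ j, ContinuousOn (damping j) (Ici 0) := fun j => by
    have := (hfin j).to_subtype
    exact continuousOn_const.add <| continuousOn_tsum_of_finite fun k =>
      continuousOn_const.mul fun t ht => (hsol k t ht).continuousAt.continuousWithinAt
  suffices ∀ n, M ≤ n → ∀ j, gen j = n → ∀ t, 0 < t → 0 < X j t from
    fun j hj t ht => this _ hj j rfl t ht
  intro n hn
  induction n, hn using Nat.le_induction with
  | base =>
    exact fun j hj t ht => pos_of_hasDerivAt_linear_of_pos_init (hdamping j) (hlin j)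
      (fun _ _ => mul_nonneg (hc j).le (sq_nonneg _)) (hinit j hj) ht.le
  | succ n _ ih =>
    intro j hj t ht
    have hj_root : j ≠ root := by rintro rfl; omega
    refine pos_of_hasDerivAt_linear_of_pos_source (hdamping j) (hlin j) (fun s hs => ?_)
      (hpos j 0 le_rfl) ht
    rw [if_neg hj_root]
    exact mul_pos (hc j) (pow_pos (ih _ (by have := hgen j hj_root; omega) s hs) 2)

theorem tree_dyadic_strict_positivity_propagates
    (J : Type) [DecidableEq J] (root : J) (parent : J → J) (gen : J → ℕ)
    (hgen_root : gen root = 0)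
    (hparent_root : parent root = root)
    (hgen : ∀ j : J, j ≠ root → gen j = gen (parent j) + 1)
    (hfin : ∀ j : J, {k : J | parent k = j ∧ k ≠ root}.Finite)
    (c d : J → ℝ) (hc : ∀ j, 0 < c j) (hd : ∀ j, 0 < d j)
    (ν f : ℝ) (hν : 0 ≤ ν) (hf : 0 ≤ f)
    (X : J → ℝ → ℝ)
    (hsol : ∀ j : J, ∀ t : ℝ, 0 ≤ t →
      HasDerivAt (X j)
        (-ν * d j * X j t
          + c j * (if j = root then f else X (parent j) t) ^ 2
          - ∑' k : {k : J | parent k = j ∧ k ≠ root},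
              c (k : J) * X j t * X (k : J) t) t)
    (hpos : ∀ j : J, ∀ t : ℝ, 0 ≤ t → 0 ≤ X j t)
    (M : ℕ)
    (hinit : ∀ j : J, gen j = M → 0 < X j 0) :
    ∀ j : J, M ≤ gen j → ∀ t : ℝ, 0 < t → 0 < X j t :=
  tree_dyadic_strict_positivity_propagates_general J root parent gen hgen_root hgen hfin c d hc ν f
    X hsol hpos M hinit
end

section
/- Consider the recursion Z_{-1} = g > 0, Z_0 = a > 0, Z_{n+1} = Z_{n-1}²/Z_n - 2^{μn} for n ≥ 0, with μ ≥ 0. If all Z_n are positive, then Z_n → 0 as n → ∞, and moreover Z_n decays super-exponentially: there exist n̄ and λ ∈ (0,1) with Z_{n̄+m} ≤ λ^{2^m} for all m ≥ 0. Consequently Σ_n (2^{sn} Z_n)² < ∞ for every s > 0. -/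
/-!
Since `2 ^ (μ n) ≥ 1`, the recursion gives `Z (n+1) * (Z (n+2) + 1) ≤ Z n ^ 2`. Hence
`Z (n+1) ≤ Z n ^ 2`, and the potential `Z n ^ 2 * Z (n+1)` drops by at least `Z (n+1) ^ 2` at
each step, so `∑ Z n ^ 2 < ∞` and `Z n → 0`. Once `Z N < 1`, iterating `Z (n+1) ≤ Z n ^ 2`
gives `Z (N+m) ≤ Z N ^ 2 ^ m`, and the ratio test gives the weighted summability.
-/

open Filter Topology Finset

theorem mul_add_one_le_sq_of_eq_div_sub {x y z c : ℝ} (hy : 0 < y) (hc : 1 ≤ c)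
    (h : z = x ^ 2 / y - c) : y * (z + 1) ≤ x ^ 2 := by
  have hmul : y * (z + c) = x ^ 2 := by
    rw [h]
    field_simp
    ring
  nlinarith

section SquaringSequence

variable {Z : ℕ → ℝ}

theorem le_pow_two_pow_of_le_sq (hZ : ∀ n, 0 ≤ Z n) (hsq : ∀ n, Z (n + 1) ≤ Z n ^ 2)
    (N m : ℕ) : Z (N + m) ≤ Z N ^ 2 ^ m := by
  induction m with
  | zero => simp
  | succ m ih =>
    calc Z (N + (m + 1)) ≤ Z (N + m) ^ 2 := hsq (N + m)
      _ ≤ (Z N ^ 2 ^ m) ^ 2 := pow_le_pow_left₀ (hZ _) ih 2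
      _ = Z N ^ 2 ^ (m + 1) := by rw [← pow_mul, pow_succ]

theorem summable_pow_mul_of_le_sq (hZ : ∀ n, 0 ≤ Z n) (hsq : ∀ n, Z (n + 1) ≤ Z n ^ 2)
    (hlim : Tendsto Z atTop (𝓝 0)) {r : ℝ} (hr : 0 ≤ r) :
    Summable fun n => r ^ n * Z n := by
  refine summable_of_ratio_norm_eventually_le (r := 1 / 2) (by norm_num) ?_
  have hsmall : ∀ᶠ n in atTop, r * Z n ≤ 1 / 2 :=
    (hlim.const_mul r).eventually (ge_mem_nhds (by norm_num : r * 0 < 1 / 2))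
  filter_upwards [hsmall] with n hn
  have hrn : 0 ≤ r ^ n := pow_nonneg hr n
  rw [Real.norm_of_nonneg (mul_nonneg (pow_nonneg hr _) (hZ _)),
    Real.norm_of_nonneg (mul_nonneg hrn (hZ n))]
  calc r ^ (n + 1) * Z (n + 1) ≤ r ^ (n + 1) * Z n ^ 2 :=
        mul_le_mul_of_nonneg_left (hsq n) (pow_nonneg hr _)
    _ = (r * Z n) * (r ^ n * Z n) := by ring
    _ ≤ 1 / 2 * (r ^ n * Z n) := mul_le_mul_of_nonneg_right hn (mul_nonneg hrn (hZ n))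

variable (hZ : ∀ n, 0 ≤ Z n) (hkey : ∀ n, Z (n + 1) * (Z (n + 2) + 1) ≤ Z n ^ 2)
include hZ hkey

theorem le_sq_of_mul_add_one_le_sq (n : ℕ) : Z (n + 1) ≤ Z n ^ 2 := by
  nlinarith [hkey n, hZ (n + 1), hZ (n + 2), mul_nonneg (hZ (n + 1)) (hZ (n + 2))]

theorem summable_sq_of_mul_add_one_le_sq : Summable fun n => Z n ^ 2 := by
  let P : ℕ → ℝ := fun n => Z n ^ 2 * Z (n + 1)
  have hdrop : ∀ n, P (n + 1) + Z (n + 1) ^ 2 ≤ P n := fun n => by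
    have := mul_le_mul_of_nonneg_left (hkey n) (hZ (n + 1))
    simp only [P]
    nlinarith
  have htelescope : ∀ n, ∑ k ∈ range n, Z (k + 1) ^ 2 + P n ≤ P 0 := fun n => by
    induction n with
    | zero => simp
    | succ n ih =>
      rw [sum_range_succ]
      linarith [hdrop n]
  refine (summable_nat_add_iff 1).mp
    (summable_of_sum_range_le (c := P 0) (fun n => sq_nonneg (Z (n + 1))) fun n => ?_)
  linarith [htelescope n, mul_nonneg (sq_nonneg (Z n)) (hZ (n + 1))]

theorem tendsto_zero_of_mul_add_one_le_sq : Tendsto Z atTop (𝓝 0) := by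
  have hsq : Tendsto (fun n => Real.sqrt (Z n ^ 2)) atTop (𝓝 (Real.sqrt 0)) :=
    (Real.continuous_sqrt.tendsto 0).comp
      (summable_sq_of_mul_add_one_le_sq hZ hkey).tendsto_atTop_zero
  simpa only [Real.sqrt_sq (hZ _), Real.sqrt_zero] using hsq

end SquaringSequence

theorem stationary_recursion_superexponential_decay_general
    (μ : ℝ) (hμ : 0 ≤ μ)
    (Z : ℕ → ℝ)
    (hrec : ∀ n : ℕ, Z (n + 2) = (Z n) ^ 2 / Z (n + 1) - (2:ℝ) ^ (μ * (n : ℝ)))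
    (hpos : ∀ n : ℕ, 0 < Z n) :
    Filter.Tendsto Z Filter.atTop (nhds 0)
    ∧ (∃ nb : ℕ, ∃ lam : ℝ, 0 < lam ∧ lam < 1 ∧ ∀ m : ℕ, Z (nb + m) ≤ lam ^ (2 ^ m))
    ∧ (∀ s : ℝ, 0 < s → Summable (fun n : ℕ => ((2:ℝ) ^ (s * (n : ℝ)) * Z n) ^ 2)) := by
  have hZ : ∀ n, 0 ≤ Z n := fun n => (hpos n).le
  have hkey : ∀ n, Z (n + 1) * (Z (n + 2) + 1) ≤ Z n ^ 2 := fun n =>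
    mul_add_one_le_sq_of_eq_div_sub (hpos _)
      (Real.one_le_rpow (by norm_num) (by positivity)) (hrec n)
  have hsq := le_sq_of_mul_add_one_le_sq hZ hkey
  have hlim := tendsto_zero_of_mul_add_one_le_sq hZ hkey
  obtain ⟨N, hN⟩ := (hlim.eventually (gt_mem_nhds one_pos)).exists
  refine ⟨hlim, ⟨N, Z N, hpos N, hN, le_pow_two_pow_of_le_sq hZ hsq N⟩, fun s _ => ?_⟩
  have hsq2 : ∀ n, Z (n + 1) ^ 2 ≤ (Z n ^ 2) ^ 2 := fun n => pow_le_pow_left₀ (hZ _) (hsq n) 2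
  have hlim2 : Tendsto (fun n => Z n ^ 2) atTop (𝓝 0) := by simpa using hlim.pow 2
  convert summable_pow_mul_of_le_sq (fun n => sq_nonneg (Z n)) hsq2 hlim2
    (sq_nonneg ((2:ℝ) ^ s)) using 2 with n
  rw [Real.rpow_mul (by norm_num), Real.rpow_natCast]
  ring

theorem stationary_recursion_superexponential_decay
    (g a μ : ℝ) (hg : 0 < g) (ha : 0 < a) (hμ : 0 ≤ μ)
    (Z : ℕ → ℝ)
    (hZ0 : Z 0 = g) (hZ1 : Z 1 = a)
    (hrec : ∀ n : ℕ, Z (n + 2) = (Z n) ^ 2 / Z (n + 1) - (2:ℝ) ^ (μ * (n : ℝ)))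
    (hpos : ∀ n : ℕ, 0 < Z n) :
    Filter.Tendsto Z Filter.atTop (nhds 0)
    ∧ (∃ nb : ℕ, ∃ lam : ℝ, 0 < lam ∧ lam < 1 ∧ ∀ m : ℕ, Z (nb + m) ≤ lam ^ (2 ^ m))
    ∧ (∀ s : ℝ, 0 < s → Summable (fun n : ℕ => ((2:ℝ) ^ (s * (n : ℝ)) * Z n) ^ 2)) :=
  stationary_recursion_superexponential_decay_general μ hμ Z hrec hpos
end

section
/- Consider the recursion Z_{-1} = g > 0, Z_0 = a > 0, Z_{n+1} = Z_{n-1}²/Z_n - 2^{μn} for n ≥ 0 with μ < 0, and assume Z_n > 0 for all n. Then (Z_n)_{n ≥ 0} is non-increasing. Moreover, if g > 1/(1 - 2^μ) then Z_n converges to a strictly positive limit. -/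
/-!
Write `q = 2^μ ∈ (0, 1)`. Multiplying the recursion by `Z (n + 1)` shows that the energy
`Z n ^ 2 * Z (n + 1)` drops by `q ^ n * Z (n + 1) ^ 2` at each step, so it stays below its initial
value `E`. This caps growth: `q ^ n * Z (n + 1) ^ 2 < E`, while a term that is large enough forces
the term two steps later to be larger by the factor `q⁻²`, so `Z` is bounded. On the other hand
one increase `Z (n + 1) < Z (n + 2)` makes the gaps `Z (n + 2k + 2) - Z (n + 2k + 1)` at least
double with `k`, which contradicts boundedness.

Once `Z` is non-increasing, `Z (m + 2) ≥ Z m - q ^ m`, and summing the geometric losses bounds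
`Z` below by `Z 0 - 1 / (1 - q)`.
-/

open Filter Topology Set

theorem sub_div_le_of_sub_mul_pow_le {u : ℕ → ℝ} {c r : ℝ} (hc : 0 ≤ c) (hr0 : 0 ≤ r)
    (hr1 : r < 1) (h : ∀ k, u k - c * r ^ k ≤ u (k + 1)) (k : ℕ) :
    u 0 - c / (1 - r) ≤ u k := by
  have hr : 0 < 1 - r := sub_pos.2 hr1
  have hmono : Monotone fun k => u k - c * r ^ k / (1 - r) := by
    refine monotone_nat_of_le_succ fun k => ?_
    have hsplit : c * r ^ (k + 1) / (1 - r) = c * r ^ k / (1 - r) - c * r ^ k := by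
      field_simp
      ring
    linarith [h k]
  have h0k := hmono (Nat.zero_le k)
  simp only [pow_zero, mul_one] at h0k
  have : 0 ≤ c * r ^ k / (1 - r) := by positivity
  linarith

/-- The paper's `Z_{n-1}` is `Z n` here, and its `2^μ` is `q`. -/
structure StationaryRecursion (q : ℝ) (Z : ℕ → ℝ) : Prop where
  pos : ∀ n, 0 < Z n
  eq : ∀ n, Z (n + 2) = Z n ^ 2 / Z (n + 1) - q ^ n

namespace StationaryRecursion

def energy (Z : ℕ → ℝ) (n : ℕ) : ℝ := Z n ^ 2 * Z (n + 1)

variable {q : ℝ} {Z : ℕ → ℝ}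

theorem mul_eq (h : StationaryRecursion q Z) (n : ℕ) :
    Z (n + 2) * Z (n + 1) = Z n ^ 2 - q ^ n * Z (n + 1) := by
  rw [h.eq n, sub_mul, div_mul_cancel₀ _ (h.pos _).ne']

theorem energy_succ (h : StationaryRecursion q Z) (n : ℕ) :
    energy Z (n + 1) = energy Z n - q ^ n * Z (n + 1) ^ 2 := by
  unfold energy
  linear_combination Z (n + 1) * h.mul_eq n

theorem energy_le (h : StationaryRecursion q Z) (hq : 0 ≤ q) (n : ℕ) :
    energy Z n ≤ energy Z 0 := by
  refine antitone_nat_of_succ_le (fun k => ?_) (Nat.zero_le n)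
  rw [h.energy_succ]
  have : 0 ≤ q ^ k * Z (k + 1) ^ 2 := by positivity
  linarith

theorem pow_mul_sq_lt (h : StationaryRecursion q Z) (hq : 0 ≤ q) (n : ℕ) :
    q ^ n * Z (n + 1) ^ 2 < energy Z 0 := by
  have : 0 < energy Z (n + 1) := mul_pos (pow_pos (h.pos _) 2) (h.pos _)
  linarith [h.energy_succ n, h.energy_le hq n]

theorem le_sq_mul (h : StationaryRecursion q Z) (hq0 : 0 ≤ q) (hq1 : q ≤ 1) {m : ℕ}
    (hm : 1 ≤ Z m) (hlarge : energy Z 0 * (1 + q ^ 2) ≤ q ^ 2 * Z m) :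
    Z m ≤ q ^ 2 * Z (m + 2) := by
  set x := Z m
  set y := Z (m + 1)
  have hy : 0 < y := h.pos _
  have hE : x ^ 2 * y ≤ energy Z 0 := h.energy_le hq0 m
  have hqm : q ^ m ≤ 1 := pow_le_one₀ hq0 hq1
  have hkey : y * (x + q ^ 2) ≤ q ^ 2 * x ^ 2 := by
    have hE0 : 0 ≤ energy Z 0 := (by positivity : 0 ≤ x ^ 2 * y).trans hE
    have : x ^ 2 * (y * (x + q ^ 2)) ≤ x ^ 2 * (q ^ 2 * x ^ 2) :=
      calc x ^ 2 * (y * (x + q ^ 2)) = x ^ 2 * y * (x + q ^ 2) := by ring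
        _ ≤ energy Z 0 * (x + q ^ 2) := by gcongr
        _ ≤ energy Z 0 * (1 + q ^ 2) * x := by
          nlinarith [mul_nonneg hE0 (mul_nonneg (sq_nonneg q) (sub_nonneg.2 hm))]
        _ ≤ q ^ 2 * x * x := by gcongr
        _ ≤ x ^ 2 * (q ^ 2 * x ^ 2) := by
          have hx2 : 0 ≤ x ^ 2 - 1 := by nlinarith
          nlinarith [mul_nonneg (mul_nonneg (sq_nonneg q) (sq_nonneg x)) hx2]
    exact le_of_mul_le_mul_left this (by positivity)
  have hmul : x * y ≤ q ^ 2 * Z (m + 2) * y := by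
    nlinarith [h.mul_eq m, mul_le_mul_of_nonneg_left hqm (by positivity : 0 ≤ q ^ 2 * y)]
  exact le_of_mul_le_mul_right hmul hy

theorem bddAbove_range (h : StationaryRecursion q Z) (hq0 : 0 < q) (hq1 : q < 1) :
    BddAbove (range Z) := by
  set s := max 1 (energy Z 0 * (1 + q ^ 2) / q ^ 2)
  have hstep : ∀ m, s ≤ Z m → Z m ≤ q ^ 2 * Z (m + 2) := fun m hm =>
    h.le_sq_mul hq0.le hq1.le ((le_max_left _ _).trans hm)
      (by rw [← div_le_iff₀' (by positivity)]; exact (le_max_right _ _).trans hm)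
  by_contra hunb
  obtain ⟨_, ⟨m, rfl⟩, hm⟩ := not_bddAbove_iff.1 hunb s
  have hlarge : ∀ j, s ≤ Z (m + 2 * j) := by
    intro j
    induction j with
    | zero => exact hm.le
    | succ j ih =>
      have : q ^ 2 * Z (m + 2 * j + 2) ≤ Z (m + 2 * j + 2) :=
        mul_le_of_le_one_left (h.pos _).le (pow_le_one₀ hq0.le hq1.le)
      exact ih.trans ((hstep _ ih).trans this)
  -- the capped quantity `q ^ n * Z (n + 1) ^ 2` grows by the factor `q⁻²` every two steps
  have hgrow : Tendsto (fun j => q ^ (m + 2 * j + 1) * Z (m + 2 * j + 2) ^ 2) atTop atTop := by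
    refine tendsto_atTop_of_geom_le (c := (q ^ 2)⁻¹) (by have := h.pos (m + 2); positivity)
      (one_lt_inv₀ (by positivity) |>.2 (pow_lt_one₀ hq0.le hq1 two_ne_zero)) fun j => ?_
    have hj : Z (m + 2 * j + 2) ≤ q ^ 2 * Z (m + 2 * (j + 1) + 2) := hstep _ (hlarge (j + 1))
    rw [show m + 2 * (j + 1) + 1 = m + 2 * j + 1 + 2 by ring, pow_add q (m + 2 * j + 1) 2]
    calc (q ^ 2)⁻¹ * (q ^ (m + 2 * j + 1) * Z (m + 2 * j + 2) ^ 2)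
        ≤ (q ^ 2)⁻¹ * (q ^ (m + 2 * j + 1) * (q ^ 2 * Z (m + 2 * (j + 1) + 2)) ^ 2) := by
          gcongr
          exact (h.pos _).le
      _ = q ^ (m + 2 * j + 1) * q ^ 2 * Z (m + 2 * (j + 1) + 2) ^ 2 := by
          field_simp
  obtain ⟨j, hj⟩ := (hgrow.eventually_gt_atTop (energy Z 0)).exists
  exact (h.pow_mul_sq_lt hq0.le (m + 2 * j + 1)).not_gt hj

theorem two_mul_sub_le (h : StationaryRecursion q Z) (hq0 : 0 ≤ q) (hq1 : q ≤ 1) {m : ℕ}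
    (hm : Z (m + 1) ≤ Z (m + 2)) : 2 * (Z (m + 2) - Z (m + 1)) ≤ Z (m + 4) - Z (m + 3) := by
  have hw := h.pos (m + 3)
  have hqq : q ^ (m + 2) ≤ q ^ (m + 1) := pow_le_pow_of_le_one hq0 hq1 (by omega)
  have hdrop : Z (m + 3) ≤ Z (m + 1) - q ^ (m + 1) := by
    have : (Z (m + 1) - q ^ (m + 1) - Z (m + 3)) * Z (m + 2) =
        Z (m + 1) * (Z (m + 2) - Z (m + 1)) := by
      linear_combination -h.mul_eq (m + 1)
    have := mul_nonneg (h.pos (m + 1)).le (sub_nonneg.2 hm)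
    nlinarith [h.pos (m + 2)]
  have : 0 ≤ (Z (m + 4) - Z (m + 3) - 2 * (Z (m + 2) - Z (m + 1))) * Z (m + 3) := by
    nlinarith [h.mul_eq (m + 2), sq_nonneg (Z (m + 2) - Z (m + 3)),
      mul_le_mul_of_nonneg_left hdrop hw.le, mul_le_mul_of_nonneg_left hqq hw.le,
      mul_nonneg hw.le (pow_nonneg hq0 (m + 1))]
  nlinarith

theorem succ_succ_le (h : StationaryRecursion q Z) (hq0 : 0 < q) (hq1 : q < 1) (n : ℕ) :
    Z (n + 2) ≤ Z (n + 1) := by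
  by_contra! hinc
  set d : ℕ → ℝ := fun k => Z (n + 2 * k + 2) - Z (n + 2 * k + 1)
  have hpos : ∀ k, 0 < d k := by
    intro k
    induction k with
    | zero => exact sub_pos.2 hinc
    | succ k ih =>
      show 0 < Z (n + 2 * k + 4) - Z (n + 2 * k + 3)
      linarith [h.two_mul_sub_le hq0.le hq1.le (m := n + 2 * k) (sub_pos.1 ih).le]
  have hd : Tendsto d atTop atTop :=
    tendsto_atTop_of_geom_le (hpos 0) one_lt_two fun k =>
      h.two_mul_sub_le hq0.le hq1.le (m := n + 2 * k) (sub_pos.1 (hpos k)).le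
  obtain ⟨B, hB⟩ := h.bddAbove_range hq0 hq1
  obtain ⟨k, hk⟩ := (hd.eventually_gt_atTop B).exists
  linarith [hB ⟨n + 2 * k + 2, rfl⟩, h.pos (n + 2 * k + 1)]

theorem antitone_succ (h : StationaryRecursion q Z) (hq0 : 0 < q) (hq1 : q < 1) :
    Antitone fun n => Z (n + 1) :=
  antitone_nat_of_succ_le (h.succ_succ_le hq0 hq1)

theorem sub_pow_le (h : StationaryRecursion q Z) {m : ℕ} (hm : Z (m + 1) ≤ Z m) :
    Z m - q ^ m ≤ Z (m + 2) := by
  have : Z m ≤ Z m ^ 2 / Z (m + 1) := by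
    rw [le_div_iff₀ (h.pos _), sq]
    exact mul_le_mul_of_nonneg_left hm (h.pos m).le
  rw [h.eq m]
  linarith

theorem sub_div_le (h : StationaryRecursion q Z) (hq0 : 0 < q) (hq1 : q < 1) {p : ℕ}
    (hp : Z (p + 1) ≤ Z p) (k : ℕ) : Z p - q ^ p / (1 - q ^ 2) ≤ Z (p + 2 * k) := by
  refine sub_div_le_of_sub_mul_pow_le (u := fun k => Z (p + 2 * k)) (by positivity)
    (by positivity) (pow_lt_one₀ hq0.le hq1 two_ne_zero) (fun k => ?_) k
  rw [← pow_mul, ← pow_add]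
  refine h.sub_pow_le ?_
  rcases k with _ | k
  · exact hp
  · exact h.succ_succ_le hq0 hq1 (p + 2 * k + 1)

theorem sub_one_div_le (h : StationaryRecursion q Z) (hq0 : 0 < q) (hq1 : q < 1) (n : ℕ) :
    Z 0 - 1 / (1 - q) ≤ Z (n + 1) := by
  obtain ⟨p, hp1, hp, hp0⟩ : ∃ p ≤ 1, Z (p + 1) ≤ Z p ∧ Z 0 ≤ Z p := by
    by_cases h10 : Z 1 ≤ Z 0
    · exact ⟨0, zero_le_one, h10, le_rfl⟩
    · exact ⟨1, le_rfl, h.succ_succ_le hq0 hq1 0, (not_le.1 h10).le⟩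
  have hgeom : q ^ p / (1 - q ^ 2) ≤ 1 / (1 - q) := by
    have hqp : q ^ p ≤ 1 + q := (pow_le_one₀ hq0.le hq1.le).trans (by linarith)
    rw [div_le_div_iff₀ (by nlinarith) (by linarith)]
    nlinarith
  calc Z 0 - 1 / (1 - q) ≤ Z p - q ^ p / (1 - q ^ 2) := by linarith
    _ ≤ Z (p + 2 * (n + 1)) := h.sub_div_le hq0 hq1 hp (n + 1)
    _ ≤ Z (n + 1) := h.antitone_succ hq0 hq1 (show n ≤ p + 2 * n + 1 by omega)

theorem exists_tendsto (h : StationaryRecursion q Z) (hq0 : 0 < q) (hq1 : q < 1)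
    (hZ0 : 1 / (1 - q) < Z 0) : ∃ z, 0 < z ∧ Tendsto Z atTop (𝓝 z) := by
  have hbdd : BddBelow (range fun n => Z (n + 1)) :=
    ⟨Z 0 - 1 / (1 - q), by rintro _ ⟨n, rfl⟩; exact h.sub_one_div_le hq0 hq1 n⟩
  refine ⟨⨅ n, Z (n + 1), (sub_pos.2 hZ0).trans_le (le_ciInf (h.sub_one_div_le hq0 hq1)), ?_⟩
  exact (tendsto_add_atTop_iff_nat 1).1 (tendsto_atTop_ciInf (h.antitone_succ hq0 hq1) hbdd)

end StationaryRecursion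

theorem stationary_recursion_nonincreasing_and_limit_general
    (g μ : ℝ) (hμ : μ < 0)
    (Z : ℕ → ℝ)
    (hZ0 : Z 0 = g)
    (hrec : ∀ n : ℕ, Z (n + 2) = (Z n) ^ 2 / Z (n + 1) - (2:ℝ) ^ (μ * (n : ℝ)))
    (hpos : ∀ n : ℕ, 0 < Z n) :
    (∀ n : ℕ, Z (n + 2) ≤ Z (n + 1))
    ∧ (g > 1 / (1 - (2:ℝ) ^ μ) →
        ∃ z : ℝ, 0 < z ∧ Filter.Tendsto Z Filter.atTop (nhds z)) := by
  have hq0 : 0 < (2:ℝ) ^ μ := Real.rpow_pos_of_pos two_pos μ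
  have hq1 : (2:ℝ) ^ μ < 1 := Real.rpow_lt_one_of_one_lt_of_neg one_lt_two hμ
  have h : StationaryRecursion ((2:ℝ) ^ μ) Z :=
    ⟨hpos, fun n => by rw [hrec n, Real.rpow_mul zero_le_two, Real.rpow_natCast]⟩
  exact ⟨h.succ_succ_le hq0 hq1, fun hg => h.exists_tendsto hq0 hq1 (hZ0 ▸ hg)⟩

theorem stationary_recursion_nonincreasing_and_limit
    (g a μ : ℝ) (hg : 0 < g) (ha : 0 < a) (hμ : μ < 0)
    (Z : ℕ → ℝ)
    (hZ0 : Z 0 = g) (hZ1 : Z 1 = a)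
    (hrec : ∀ n : ℕ, Z (n + 2) = (Z n) ^ 2 / Z (n + 1) - (2:ℝ) ^ (μ * (n : ℝ)))
    (hpos : ∀ n : ℕ, 0 < Z n) :
    (∀ n : ℕ, Z (n + 2) ≤ Z (n + 1))
    ∧ (g > 1 / (1 - (2:ℝ) ^ μ) →
        ∃ z : ℝ, 0 < z ∧ Filter.Tendsto Z Filter.atTop (nhds z)) :=
  stationary_recursion_nonincreasing_and_limit_general g μ hμ Z hZ0 hrec hpos
end

section
/- In the non-increasing case of the stationary viscous dyadic recursion with μ < 0: if Z_m/Z_{m-1} = λ > 1 for some m, then Z_{m+2}/Z_{m+1} > λ⁴. More precisely, setting x = 2^{μm} Z_m / Z_{m-1}² one has 0 < x < 1, Z_{m+1} = (2^{μm}/x)(1-x), Z_{m+1}/Z_m = λ^{-2}(1-x), and Z_{m+2}/Z_{m+1} > (λ⁴ - x)/(1 - x) > λ⁴. -/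
/-!
With `t = 2^{μn}` and `x = t Z_{n+1} / Z_n²`, one step of the recursion factors as
`Z_{n+2} = (Z_n² / Z_{n+1}) (1 - x)`, so positivity of `Z_{n+2}` forces `x < 1`. Substituting
once more gives `Z_{n+3} / Z_{n+2} = λ⁴ / (1 - x)² - 2^μ x / (1 - x)`, which exceeds
`(λ⁴ - x) / (1 - x)` by `(λ⁴ x + x (1 - x)(1 - 2^μ)) / (1 - x)² > 0` because `2^μ ≤ 1`.
-/

section
variable {A B t x : ℝ}

lemma sq_div_sub_eq_mul_one_sub (hA : A ≠ 0) (hB : B ≠ 0) (hx : x = t * B / A ^ 2) :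
    A ^ 2 / B - t = A ^ 2 / B * (1 - x) := by
  subst hx; field_simp

lemma sq_div_sub_eq_div_mul_one_sub (hA : A ≠ 0) (hB : B ≠ 0) (ht : t ≠ 0)
    (hx : x = t * B / A ^ 2) :
    A ^ 2 / B - t = t / x * (1 - x) := by
  subst hx; field_simp

lemma sq_div_sub_div_eq (hA : A ≠ 0) (hB : B ≠ 0) (hx : x = t * B / A ^ 2) :
    (A ^ 2 / B - t) / B = (B / A)⁻¹ ^ 2 * (1 - x) := by
  subst hx; field_simp

lemma lt_one_of_sq_div_sub_pos (hA : 0 < A) (hB : 0 < B) (hC : 0 < A ^ 2 / B - t)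
    (hx : x = t * B / A ^ 2) : x < 1 := by
  rw [sq_div_sub_eq_mul_one_sub hA.ne' hB.ne' hx] at hC
  have := pos_of_mul_pos_right hC (by positivity)
  linarith

lemma next_sq_div_sub_div_eq (hA : 0 < A) (hB : 0 < B) (hC : 0 < A ^ 2 / B - t)
    (hx : x = t * B / A ^ 2) (s : ℝ) :
    (B ^ 2 / (A ^ 2 / B - t) - t * s) / (A ^ 2 / B - t)
      = (B / A) ^ 4 / (1 - x) ^ 2 - s * (x / (1 - x)) := by
  have h1x : 1 - x ≠ 0 := (sub_pos.2 (lt_one_of_sq_div_sub_pos hA hB hC hx)).ne'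
  have ht : t = x * A ^ 2 / B := by rw [hx]; field_simp
  rw [sq_div_sub_eq_mul_one_sub hA.ne' hB.ne' hx, ht]
  field_simp

end

section
variable {L x : ℝ}

lemma sub_div_one_sub_lt {s : ℝ} (hL : 0 < L) (hx0 : 0 < x) (hx1 : x < 1) (hs : s ≤ 1) :
    (L - x) / (1 - x) < L / (1 - x) ^ 2 - s * (x / (1 - x)) := by
  have h1x : 0 < 1 - x := sub_pos.2 hx1
  have key : L / (1 - x) ^ 2 - s * (x / (1 - x)) - (L - x) / (1 - x)
      = (L * x + x * (1 - x) * (1 - s)) / (1 - x) ^ 2 := by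
    field_simp; ring
  have : 0 < (L * x + x * (1 - x) * (1 - s)) / (1 - x) ^ 2 := by
    have := mul_nonneg (mul_pos hx0 h1x).le (sub_nonneg.2 hs)
    positivity
  linarith

lemma lt_sub_div_one_sub (hL : 1 < L) (hx0 : 0 < x) (hx1 : x < 1) :
    L < (L - x) / (1 - x) := by
  rw [lt_div_iff₀ (sub_pos.2 hx1)]
  nlinarith

end

theorem stationary_recursion_ratio_growth
    (μ : ℝ) (hμ : μ < 0) (Z : ℕ → ℝ)
    (hrec : ∀ n : ℕ, Z (n + 2) = (Z n) ^ 2 / Z (n + 1) - (2:ℝ) ^ (μ * (n : ℝ)))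
    (hpos : ∀ n : ℕ, 0 < Z n)
    (n : ℕ) (lam : ℝ) (hlam : lam = Z (n + 1) / Z n) (hlam1 : 1 < lam)
    (x : ℝ) (hx : x = (2:ℝ) ^ (μ * (n : ℝ)) * Z (n + 1) / (Z n) ^ 2) :
    (0 < x ∧ x < 1)
    ∧ Z (n + 2) = ((2:ℝ) ^ (μ * (n : ℝ)) / x) * (1 - x)
    ∧ Z (n + 2) / Z (n + 1) = lam⁻¹ ^ 2 * (1 - x)
    ∧ (lam ^ 4 - x) / (1 - x) < Z (n + 3) / Z (n + 2)
    ∧ lam ^ 4 < (lam ^ 4 - x) / (1 - x) := by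
  set t := (2:ℝ) ^ (μ * (n : ℝ))
  have ht : 0 < t := by positivity
  have hA := hpos n
  have hB := hpos (n + 1)
  have hC : 0 < Z n ^ 2 / Z (n + 1) - t := hrec n ▸ hpos (n + 2)
  have hx0 : 0 < x := by rw [hx]; positivity
  have hx1 : x < 1 := lt_one_of_sq_div_sub_pos hA hB hC hx
  have hZ3 : Z (n + 3) = Z (n + 1) ^ 2 / Z (n + 2) - t * 2 ^ μ := by
    rw [hrec (n + 1), Nat.cast_succ, mul_add_one, Real.rpow_add two_pos]
  have hL : 1 < lam ^ 4 := one_lt_pow₀ hlam1 (by norm_num)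
  refine ⟨⟨hx0, hx1⟩, (hrec n).trans (sq_div_sub_eq_div_mul_one_sub hA.ne' hB.ne' ht.ne' hx),
    ?_, ?_, lt_sub_div_one_sub hL hx0 hx1⟩
  · rw [hrec n, hlam]
    exact sq_div_sub_div_eq hA.ne' hB.ne' hx
  · rw [hZ3, hrec n, next_sq_div_sub_div_eq hA hB hC hx, ← hlam]
    exact sub_div_one_sub_lt (by positivity) hx0 hx1
      (Real.rpow_le_one_of_one_le_of_nonpos one_le_two hμ.le)
end

section
/- There exists at least one stationary positive l² solution of the viscous forced classic dyadic model: for every ν > 0, β > 0, γ > 0, f > 0, there is a sequence (Y_n)_{n ≥ 0} of strictly positive reals with Σ_n Y_n² < ∞ satisfying -ν 2^{γn} Y_n + 2^{βn} Y_{n-1}² - 2^{β(n+1)} Y_n Y_{n+1} = 0 for all n ≥ 0, with Y_{-1} := f. -/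
/-!
With `Y n = Z (n + 1)`, the stationary equation is the two-step recursion
`Z (n + 2) = b Z n ^ 2 / Z (n + 1) - c n` (`DyadicShooting.seq`) with `Z 0 = f`, `b = 2 ^ (-β)`
and `c n = ν 2 ^ (γ n - β (n + 1)) > 0`; the initial value `Z 1 = x` is a free shooting
parameter. The set `P n` (`posUpTo n`) of parameters for which `Z 0, …, Z n` are positive is
open, bounded for `n ≥ 2`, and on it the odd terms increase and the even terms decrease in `x`.
At a limit point of `P (n + 2)` a first vanishing term `Z m` with `m ≤ n` would force
`Z (m + 2) → -c (m + 1) < 0`, so `closure (P (n + 2)) ⊆ P n`. At one of the two ends of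
`P (n + 2)` it is `Z (n + 2)` that vanishes, so `Z (n + 3) → +∞` there and `P (n + 3)` is
nonempty. Cantor's intersection theorem then gives a parameter for which every `Z n` is positive.

Square summability is the a priori energy bound: the flux `2 ^ (β n) Y (n - 1) ^ 2 Y n` through
shell `n` is nonnegative and drops by `ν 2 ^ (γ n) Y n ^ 2 ≥ ν Y n ^ 2` from shell `n` to
shell `n + 1`.
-/

open Filter Set Topology

lemma summable_of_le_sub_succ {u P : ℕ → ℝ} (hu : ∀ n, 0 ≤ u n) (hP : ∀ n, 0 ≤ P n)
    (h : ∀ n, u n ≤ P n - P (n + 1)) : Summable u :=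
  summable_of_sum_range_le (c := P 0) hu fun N => by
    have := Finset.sum_le_sum fun i (_ : i ∈ Finset.range N) => h i
    rw [Finset.sum_range_sub'] at this
    linarith [hP N]

lemma csSup_notMem_of_isOpen {s : Set ℝ} (hs : IsOpen s) (hbdd : BddAbove s) : sSup s ∉ s :=
  fun h => by
    obtain ⟨y, hy, hys⟩ := (hs.eventually_mem h).exists_gt
    exact (le_csSup hbdd hys).not_gt hy

lemma csInf_notMem_of_isOpen {s : Set ℝ} (hs : IsOpen s) (hbdd : BddBelow s) : sInf s ∉ s :=
  fun h => by
    obtain ⟨y, hy, hys⟩ := (hs.eventually_mem h).exists_lt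
    exact (csInf_le hbdd hys).not_gt hy

lemma mul_sq_div_lt_mul_sq_div {b p q r s : ℝ} (hb : 0 < b) (hp : 0 < p) (hpq : p < q)
    (hs : 0 < s) (hsr : s < r) : b * p ^ 2 / r < b * q ^ 2 / s := by
  gcongr

namespace DyadicShooting

noncomputable def seq (f b : ℝ) (c : ℕ → ℝ) (x : ℝ) : ℕ → ℝ
  | 0 => f
  | 1 => x
  | n + 2 => b * seq f b c x n ^ 2 / seq f b c x (n + 1) - c n

def posUpTo (f b : ℝ) (c : ℕ → ℝ) (n : ℕ) : Set ℝ :=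
  {x | ∀ k ≤ n, 0 < seq f b c x k}

variable {f b : ℝ} {c : ℕ → ℝ}

lemma seq_add_two (x : ℝ) (n : ℕ) :
    seq f b c x (n + 2) = b * seq f b c x n ^ 2 / seq f b c x (n + 1) - c n := rfl

lemma continuousAt_seq {x₀ : ℝ} : ∀ {m : ℕ},
    (∀ k < m, seq f b c x₀ k ≠ 0) → ContinuousAt (fun x => seq f b c x m) x₀
  | 0, _ => continuousAt_const
  | 1, _ => continuousAt_id
  | n + 2, h =>
    ((continuousAt_const.mul ((continuousAt_seq fun k hk => h k (by omega)).pow 2)).div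
      (continuousAt_seq fun k hk => h k (by omega)) (h (n + 1) (by omega))).sub continuousAt_const

lemma mem_posUpTo_succ {x : ℝ} {n : ℕ} :
    x ∈ posUpTo f b c (n + 1) ↔ x ∈ posUpTo f b c n ∧ 0 < seq f b c x (n + 1) := by
  refine ⟨fun h => ⟨fun k hk => h k (hk.trans n.le_succ), h _ le_rfl⟩,
    fun ⟨h, h'⟩ k hk => ?_⟩
  rcases Nat.le_succ_iff.1 hk with hk | rfl
  exacts [h k hk, h']

lemma mem_posUpTo_zero {x : ℝ} : x ∈ posUpTo f b c 0 ↔ 0 < f :=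
  ⟨fun h => h 0 le_rfl, fun hf _ hk => (Nat.le_zero.1 hk) ▸ hf⟩

lemma posUpTo_antitone : Antitone (posUpTo f b c) :=
  fun _ _ hmn _ hx k hk => hx k (hk.trans hmn)

lemma continuousAt_seq_succ {x₀ : ℝ} {n : ℕ} (hx₀ : x₀ ∈ posUpTo f b c n) :
    ContinuousAt (fun x => seq f b c x (n + 1)) x₀ :=
  continuousAt_seq fun k hk => (hx₀ k (by omega)).ne'

lemma isOpen_posUpTo (n : ℕ) : IsOpen (posUpTo f b c n) := by
  refine isOpen_iff_mem_nhds.2 fun x hx => ?_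
  have hev : ∀ k ∈ Finset.Iic n, ∀ᶠ y in 𝓝 x, 0 < seq f b c y k := fun k hk =>
    have hk := Finset.mem_Iic.1 hk
    (continuousAt_seq fun i hi => (hx i (by omega)).ne').eventually (lt_mem_nhds (hx k hk))
  filter_upwards [(eventually_all_finset _).2 hev] with y hy k hk using hy k (Finset.mem_Iic.2 hk)

lemma posUpTo_two_subset (hc : 0 < c 0) : posUpTo f b c 2 ⊆ Ioo 0 (b * f ^ 2 / c 0) := by
  intro x hx
  have hx0 : 0 < x := hx 1 (by norm_num)
  have h2 : 0 < b * f ^ 2 / x - c 0 := hx 2 le_rfl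
  refine ⟨hx0, (lt_div_iff₀ hc).2 ?_⟩
  rw [sub_pos, lt_div_iff₀ hx0] at h2
  linarith

lemma isBounded_posUpTo (hc : 0 < c 0) {n : ℕ} (hn : 2 ≤ n) :
    Bornology.IsBounded (posUpTo f b c n) :=
  Metric.isBounded_Ioo _ _ |>.subset <| (posUpTo_antitone hn).trans (posUpTo_two_subset hc)

lemma strictMonoOn_odd_strictAntiOn_even (hb : 0 < b) (j : ℕ) :
    StrictMonoOn (fun x => seq f b c x (2 * j + 1)) (posUpTo f b c (2 * j)) ∧
      StrictAntiOn (fun x => seq f b c x (2 * j + 2)) (posUpTo f b c (2 * j + 1)) := by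
  induction j with
  | zero =>
    refine ⟨fun x _ y _ hxy => hxy, fun x hx y _ hxy => ?_⟩
    have hf : 0 < f := hx 0 (Nat.zero_le _)
    exact sub_lt_sub_right (div_lt_div_of_pos_left (by positivity) (hx 1 le_rfl) hxy) _
  | succ j ih =>
    obtain ⟨hodd, heven⟩ := ih
    have hodd' :
        StrictMonoOn (fun x => seq f b c x (2 * j + 1 + 2)) (posUpTo f b c (2 * j + 2)) := by
      intro x hx y hy hxy
      have hx₁ := posUpTo_antitone (by omega : 2 * j + 1 ≤ 2 * j + 2) hx
      have hy₁ := posUpTo_antitone (by omega : 2 * j + 1 ≤ 2 * j + 2) hy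
      have hx₀ := posUpTo_antitone (by omega : 2 * j ≤ 2 * j + 1) hx₁
      have hy₀ := posUpTo_antitone (by omega : 2 * j ≤ 2 * j + 1) hy₁
      exact sub_lt_sub_right (mul_sq_div_lt_mul_sq_div hb (hx (2 * j + 1) (by omega))
        (hodd hx₀ hy₀ hxy) (hy (2 * j + 2) le_rfl) (heven hx₁ hy₁ hxy)) _
    refine ⟨hodd', fun x hx y hy hxy => ?_⟩
    have hx₂ := posUpTo_antitone (by omega : 2 * j + 2 ≤ 2 * j + 3) hx
    have hy₂ := posUpTo_antitone (by omega : 2 * j + 2 ≤ 2 * j + 3) hy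
    have hx₁ := posUpTo_antitone (by omega : 2 * j + 1 ≤ 2 * j + 2) hx₂
    have hy₁ := posUpTo_antitone (by omega : 2 * j + 1 ≤ 2 * j + 2) hy₂
    exact sub_lt_sub_right (mul_sq_div_lt_mul_sq_div hb (hy (2 * j + 2) (by omega))
      (heven hx₁ hy₁ hxy) (hx (2 * j + 3) le_rfl) (hodd' hx₂ hy₂ hxy)) _

lemma injOn_seq_succ (hb : 0 < b) (n : ℕ) :
    InjOn (fun x => seq f b c x (n + 1)) (posUpTo f b c n) := by
  obtain ⟨j, rfl | rfl⟩ := Nat.even_or_odd' n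
  exacts [(strictMonoOn_odd_strictAntiOn_even hb j).1.injOn,
    (strictMonoOn_odd_strictAntiOn_even hb j).2.injOn]

section Boundary

variable {l : Filter ℝ} {e : ℝ} {k : ℕ}

lemma seq_succ_nonneg_of_eventually_pos [l.NeBot] (hl : l ≤ 𝓝 e) (he : e ∈ posUpTo f b c k)
    (hpos : ∀ᶠ x in l, 0 < seq f b c x (k + 1)) : 0 ≤ seq f b c e (k + 1) :=
  ge_of_tendsto ((continuousAt_seq_succ he).tendsto.mono_left hl) (hpos.mono fun _ => le_of_lt)

lemma tendsto_seq_atTop_of_eq_zero (hb : 0 < b) (hl : l ≤ 𝓝 e) (he : e ∈ posUpTo f b c k)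
    (hzero : seq f b c e (k + 1) = 0) (hpos : ∀ᶠ x in l, 0 < seq f b c x (k + 1)) :
    Tendsto (fun x => seq f b c x (k + 2)) l atTop := by
  have hnum : Tendsto (fun x => b * seq f b c x k ^ 2) l (𝓝 (b * seq f b c e k ^ 2)) :=
    tendsto_const_nhds.mul <|
      ((continuousAt_seq fun i hi => (he i (by omega)).ne').tendsto.mono_left hl).pow 2
  have hden : Tendsto (fun x => seq f b c x (k + 1)) l (𝓝[>] 0) :=
    tendsto_nhdsWithin_of_tendsto_nhds_of_eventually_within _
      (hzero ▸ (continuousAt_seq_succ he).tendsto.mono_left hl) hpos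
  have hk : 0 < b * seq f b c e k ^ 2 := by have := he k le_rfl; positivity
  simpa only [seq_add_two, div_eq_mul_inv, sub_eq_add_neg, Function.comp_def] using
    tendsto_atTop_add_const_right l _
      (hnum.pos_mul_atTop hk (tendsto_inv_nhdsGT_zero.comp hden))

lemma tendsto_seq_of_eq_zero (hb : 0 < b) (hl : l ≤ 𝓝 e) (he : e ∈ posUpTo f b c k)
    (hzero : seq f b c e (k + 1) = 0) (hpos : ∀ᶠ x in l, 0 < seq f b c x (k + 1)) :
    Tendsto (fun x => seq f b c x (k + 3)) l (𝓝 (-c (k + 1))) := by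
  have hnum : Tendsto (fun x => b * seq f b c x (k + 1) ^ 2) l (𝓝 0) := by
    simpa [hzero] using (tendsto_const_nhds (x := b)).mul
      ((continuousAt_seq_succ he).tendsto.mono_left hl |>.pow 2)
  simpa only [seq_add_two, zero_sub] using
    (hnum.div_atTop (tendsto_seq_atTop_of_eq_zero hb hl he hzero hpos)).sub_const (c (k + 1))

end Boundary

/-- If `seq e` first vanished at an index `k + 1 ≤ n`, then `seq x (k + 3)` would tend to
`-c (k + 1) < 0` as `x → e` inside `posUpTo (n + 2)`. -/
lemma closure_posUpTo_subset (hf : 0 < f) (hb : 0 < b) (hc : ∀ n, 0 < c n) (n : ℕ) :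
    closure (posUpTo f b c (n + 2)) ⊆ posUpTo f b c n := by
  intro e he
  have : (𝓝[posUpTo f b c (n + 2)] e).NeBot := mem_closure_iff_nhdsWithin_neBot.1 he
  have hev : ∀ k ≤ n + 2, ∀ᶠ x in 𝓝[posUpTo f b c (n + 2)] e, 0 < seq f b c x k :=
    fun k hk => eventually_nhdsWithin_of_forall fun x hx => hx k hk
  suffices ∀ k ≤ n, e ∈ posUpTo f b c k from this n le_rfl
  intro k
  induction k with
  | zero => exact fun _ => mem_posUpTo_zero.2 hf
  | succ k ih =>
    intro hk
    have he := ih (by omega)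
    have hnonneg := seq_succ_nonneg_of_eventually_pos nhdsWithin_le_nhds he (hev _ (by omega))
    refine mem_posUpTo_succ.2 ⟨he, hnonneg.lt_of_ne fun hzero => ?_⟩
    have hlim := tendsto_seq_of_eq_zero hb nhdsWithin_le_nhds he hzero.symm (hev _ (by omega))
    linarith [ge_of_tendsto hlim ((hev (k + 3) (by omega)).mono fun _ => le_of_lt), hc (k + 1)]

lemma posUpTo_add_three_nonempty (hb : 0 < b) {m : ℕ} {e : ℝ}
    (he : e ∈ closure (posUpTo f b c (m + 2))) (he' : e ∉ posUpTo f b c (m + 2))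
    (hm : e ∈ posUpTo f b c m) (hne : seq f b c e (m + 1) ≠ 0) :
    (posUpTo f b c (m + 3)).Nonempty := by
  set l := 𝓝[posUpTo f b c (m + 2)] e
  have : l.NeBot := mem_closure_iff_nhdsWithin_neBot.1 he
  have hev : ∀ k ≤ m + 2, ∀ᶠ x in l, 0 < seq f b c x k :=
    fun k hk => eventually_nhdsWithin_of_forall fun x hx => hx k hk
  have hm₁ : e ∈ posUpTo f b c (m + 1) := mem_posUpTo_succ.2 ⟨hm,
    (seq_succ_nonneg_of_eventually_pos nhdsWithin_le_nhds hm (hev _ (by omega))).lt_of_ne' hne⟩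
  have hzero : seq f b c e (m + 2) = 0 :=
    le_antisymm (not_lt.1 fun h => he' (mem_posUpTo_succ.2 ⟨hm₁, h⟩))
      (seq_succ_nonneg_of_eventually_pos nhdsWithin_le_nhds hm₁ (hev _ le_rfl))
  have hlim := tendsto_seq_atTop_of_eq_zero hb nhdsWithin_le_nhds hm₁ hzero (hev _ le_rfl)
  obtain ⟨x, hx, hx'⟩ := (eventually_mem_nhdsWithin.and (hlim.eventually_gt_atTop 0)).exists
  exact ⟨x, mem_posUpTo_succ.2 ⟨hx, hx'⟩⟩

/-- Both `sInf` and `sSup` of `posUpTo (m + 2)` lie in `posUpTo m`, and `seq · (m + 1)` is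
injective there, so at one of them `seq · (m + 2)` is the first term to vanish. -/
lemma posUpTo_add_three_nonempty_of_nonempty (hf : 0 < f) (hb : 0 < b) (hc : ∀ n, 0 < c n)
    {m : ℕ} (h : (posUpTo f b c (m + 2)).Nonempty) : (posUpTo f b c (m + 3)).Nonempty := by
  obtain ⟨x₀, hx₀⟩ := h
  have hbdd := isBounded_posUpTo (f := f) (b := b) (hc 0) (by omega : 2 ≤ m + 2)
  have hsub := closure_posUpTo_subset hf hb hc m
  have hinf := csInf_mem_closure ⟨x₀, hx₀⟩ hbdd.bddBelow
  have hsup := csSup_mem_closure ⟨x₀, hx₀⟩ hbdd.bddAbove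
  have hinf' := csInf_notMem_of_isOpen (isOpen_posUpTo _) hbdd.bddBelow
  have hsup' := csSup_notMem_of_isOpen (isOpen_posUpTo _) hbdd.bddAbove
  have hne : sInf (posUpTo f b c (m + 2)) ≠ sSup (posUpTo f b c (m + 2)) := fun heq =>
    have := (csInf_le hbdd.bddBelow hx₀).antisymm (heq ▸ le_csSup hbdd.bddAbove hx₀)
    hinf' (this ▸ hx₀)
  by_cases hzero : seq f b c (sSup (posUpTo f b c (m + 2))) (m + 1) = 0
  · refine posUpTo_add_three_nonempty hb hinf hinf' (hsub hinf) fun h => hne ?_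
    exact injOn_seq_succ hb m (hsub hinf) (hsub hsup) (h.trans hzero.symm)
  · exact posUpTo_add_three_nonempty hb hsup hsup' (hsub hsup) hzero

lemma posUpTo_nonempty (hf : 0 < f) (hb : 0 < b) (hc : ∀ n, 0 < c n) (n : ℕ) :
    (posUpTo f b c n).Nonempty := by
  suffices ∀ m, (posUpTo f b c (m + 2)).Nonempty from
    (this n).mono (posUpTo_antitone (by omega))
  intro m
  induction m with
  | zero =>
    have hx : 0 < b * f ^ 2 / (2 * c 0) := by have := hc 0; positivity
    refine ⟨b * f ^ 2 / (2 * c 0), mem_posUpTo_succ.2 ⟨mem_posUpTo_succ.2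
      ⟨mem_posUpTo_zero.2 hf, hx⟩, ?_⟩⟩
    show 0 < b * f ^ 2 / (b * f ^ 2 / (2 * c 0)) - c 0
    rw [div_div_cancel₀ (by positivity)]
    linarith [hc 0]
  | succ m ih => exact posUpTo_add_three_nonempty_of_nonempty hf hb hc ih

theorem exists_forall_seq_pos (hf : 0 < f) (hb : 0 < b) (hc : ∀ n, 0 < c n) :
    ∃ x, ∀ n, 0 < seq f b c x n := by
  obtain ⟨x, hx⟩ := IsCompact.nonempty_iInter_of_sequence_nonempty_isCompact_isClosed
    (fun n => closure (posUpTo f b c (n + 2)))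
    (fun n => closure_mono (posUpTo_antitone (by omega)))
    (fun n => (posUpTo_nonempty hf hb hc _).closure)
    (isBounded_posUpTo (hc 0) le_rfl).isCompact_closure (fun _ => isClosed_closure)
  exact ⟨x, fun n => closure_posUpTo_subset hf hb hc n (mem_iInter.1 hx n) n le_rfl⟩

end DyadicShooting

noncomputable def stationaryResidual (ν β γ f : ℝ) (Y : ℕ → ℝ) (n : ℕ) : ℝ :=
  -ν * (2:ℝ) ^ (γ * (n : ℝ)) * Y n
    + (2:ℝ) ^ (β * (n : ℝ)) * (if n = 0 then f else Y (n - 1)) ^ 2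
    - (2:ℝ) ^ (β * ((n : ℝ) + 1)) * Y n * Y (n + 1)

noncomputable def energyFlux (β f : ℝ) (Y : ℕ → ℝ) (n : ℕ) : ℝ :=
  (2:ℝ) ^ (β * (n : ℝ)) * (if n = 0 then f else Y (n - 1)) ^ 2 * Y n

section Stationary

variable {ν β γ f : ℝ} {Y : ℕ → ℝ}

lemma energyFlux_sub_energyFlux_succ (h : ∀ n, stationaryResidual ν β γ f Y n = 0)
    (n : ℕ) :
    energyFlux β f Y n - energyFlux β f Y (n + 1) = ν * 2 ^ (γ * (n : ℝ)) * Y n ^ 2 := by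
  have hn := h n
  simp only [stationaryResidual] at hn
  simp only [energyFlux, Nat.add_eq_zero_iff, one_ne_zero, and_false, if_false,
    Nat.add_sub_cancel, Nat.cast_succ]
  linear_combination Y n * hn

lemma summable_sq_of_stationaryResidual_eq_zero (hν : 0 < ν) (hγ : 0 ≤ γ)
    (hY : ∀ n, 0 ≤ Y n) (h : ∀ n, stationaryResidual ν β γ f Y n = 0) :
    Summable fun n => Y n ^ 2 := by
  refine summable_of_le_sub_succ (fun n => sq_nonneg (Y n))
    (P := fun n => energyFlux β f Y n / ν)
    (fun n => by have := hY n; unfold energyFlux; positivity) fun n => ?_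
  rw [← sub_div, energyFlux_sub_energyFlux_succ h, le_div_iff₀ hν]
  have : (1:ℝ) ≤ 2 ^ (γ * (n : ℝ)) := Real.one_le_rpow (by norm_num) (by positivity)
  nlinarith [mul_nonneg (sub_nonneg.2 this) (mul_nonneg hν.le (sq_nonneg (Y n)))]

end Stationary

lemma stationaryResidual_shift_eq_zero {ν β γ f : ℝ} {Z : ℕ → ℝ} (h₀ : Z 0 = f)
    (hZ : ∀ n, Z (n + 1) ≠ 0)
    (hrec : ∀ n, Z (n + 2) = 2 ^ (-β) * Z n ^ 2 / Z (n + 1) - ν * 2 ^ (γ * n - β * (n + 1)))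
    (n : ℕ) : stationaryResidual ν β γ f (fun n => Z (n + 1)) n = 0 := by
  have hprev : (if n = 0 then f else Z (n - 1 + 1)) = Z n := by
    rcases n with _ | n
    exacts [h₀.symm, rfl]
  have h₁ : (2:ℝ) ^ (β * ((n : ℝ) + 1)) * 2 ^ (-β) = 2 ^ (β * n) := by
    rw [← Real.rpow_add two_pos]; ring_nf
  have h₂ : (2:ℝ) ^ (β * ((n : ℝ) + 1)) * 2 ^ (γ * n - β * (n + 1)) = 2 ^ (γ * n) := by
    rw [← Real.rpow_add two_pos]; ring_nf
  have hflux : Z (n + 1) * Z (n + 2)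
      = 2 ^ (-β) * Z n ^ 2 - ν * 2 ^ (γ * n - β * (n + 1)) * Z (n + 1) := by
    rw [hrec]
    field_simp [hZ n]
  simp only [stationaryResidual, hprev]
  linear_combination
    -(2:ℝ) ^ (β * ((n : ℝ) + 1)) * hflux - Z n ^ 2 * h₁ + ν * Z (n + 1) * h₂

theorem viscous_classic_dyadic_stationary_exists_general
    (ν β γ f : ℝ) (hν : 0 < ν) (hγ : 0 < γ) (hf : 0 < f) :
    ∃ Y : ℕ → ℝ, (∀ n : ℕ, 0 < Y n) ∧ Summable (fun n : ℕ => (Y n) ^ 2) ∧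
      ∀ n : ℕ,
        -ν * (2:ℝ) ^ (γ * (n : ℝ)) * Y n
          + (2:ℝ) ^ (β * (n : ℝ)) * (if n = 0 then f else Y (n - 1)) ^ 2
          - (2:ℝ) ^ (β * ((n : ℝ) + 1)) * Y n * Y (n + 1) = 0 := by
  obtain ⟨x, hx⟩ := DyadicShooting.exists_forall_seq_pos (b := 2 ^ (-β))
    (c := fun n => ν * 2 ^ (γ * n - β * (n + 1))) hf (by positivity) fun n => by positivity
  have hY := stationaryResidual_shift_eq_zero rfl (fun n => (hx (n + 1)).ne')
    (DyadicShooting.seq_add_two x)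
  exact ⟨_, fun n => hx (n + 1), summable_sq_of_stationaryResidual_eq_zero hν hγ.le
    (fun n => (hx (n + 1)).le) hY, hY⟩

theorem viscous_classic_dyadic_stationary_exists
    (ν β γ f : ℝ) (hν : 0 < ν) (hβ : 0 < β) (hγ : 0 < γ) (hf : 0 < f) :
    ∃ Y : ℕ → ℝ, (∀ n : ℕ, 0 < Y n) ∧ Summable (fun n : ℕ => (Y n) ^ 2) ∧
      ∀ n : ℕ,
        -ν * (2:ℝ) ^ (γ * (n : ℝ)) * Y n
          + (2:ℝ) ^ (β * (n : ℝ)) * (if n = 0 then f else Y (n - 1)) ^ 2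
          - (2:ℝ) ^ (β * ((n : ℝ) + 1)) * Y n * Y (n + 1) = 0 :=
  viscous_classic_dyadic_stationary_exists_general ν β γ f hν hγ hf
end
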